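/- arXiv:1102.2374 — 6 statements merged into one kernel-verified Lean document; each statement's English description precedes it below -/
import Mathlib

section
/- Let μ > 0 and let v : [0,∞) → ℝ be a C² solution of v'' + v'/a + μv + v³ = 0 for a > 0, with v and a·v'(a) continuous at a = 0. Set w(a) = √a · v(a) and E(a) = ½(w')² + w²/(8a²) + (μ/2)w² + w⁴/(4a). Then E is nonincreasing on (0,∞), with E'(a) = -w²/(4a³) - w⁴/(4a²) ≤ 0. -/
/-!
The substitution `w = √a · v` removes the first-order term of the radial ODE: `w` solves
`w'' + (1/(4a²) + μ) w + w³/a = 0`. Differentiating `E` along this equation, every term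
containing `w'` cancels, leaving only the explicit dependence of `E` on `a`, which contributes
`-w²/(4a³) - w⁴/(4a²) ≤ 0`.
-/

open Real Set Filter Topology

section ContDiffOn

variable {𝕜 F : Type*} [NontriviallyNormedField 𝕜] [NormedAddCommGroup F] [NormedSpace 𝕜 F]
  {f : 𝕜 → F} {s : Set 𝕜} {n : WithTop ℕ∞} {x : 𝕜}

lemma ContDiffOn.hasDerivAt_of_isOpen (hf : ContDiffOn 𝕜 n f s) (hn : n ≠ 0) (hs : IsOpen s)
    (hx : x ∈ s) : HasDerivAt f (deriv f x) x :=
  ((hf.differentiableOn hn).differentiableAt (hs.mem_nhds hx)).hasDerivAt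

lemma ContDiffOn.hasDerivAt_deriv_of_isOpen (hf : ContDiffOn 𝕜 n f s) (hn : 2 ≤ n)
    (hs : IsOpen s) (hx : x ∈ s) : HasDerivAt (deriv f) (deriv (deriv f) x) x :=
  (hf.deriv_of_isOpen hs (m := 1) hn).hasDerivAt_of_isOpen one_ne_zero hs hx

end ContDiffOn

section SqrtMul

variable {v v' : ℝ → ℝ}

lemma hasDerivAt_sqrt_mul {a : ℝ} (ha : 0 < a) (hv : HasDerivAt v (v' a) a) :
    HasDerivAt (fun b => √b * v b) (v a / (2 * √a) + √a * v' a) a :=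
  ((hasDerivAt_sqrt ha.ne').mul hv).congr_deriv (by ring)

lemma hasDerivAt_deriv_sqrt_mul {v'' a : ℝ} (ha : 0 < a) (hv : ∀ b > 0, HasDerivAt v (v' b) b)
    (hv' : HasDerivAt v' v'' a) :
    HasDerivAt (deriv fun b => √b * v b) (√a * (v'' + v' a / a) - √a * v a / (4 * a ^ 2)) a := by
  have hderiv : deriv (fun b => √b * v b) =ᶠ[𝓝 a] fun b => v b / (2 * √b) + √b * v' b := by
    filter_upwards [Ioi_mem_nhds ha] with b hb using (hasDerivAt_sqrt_mul hb (hv b hb)).deriv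
  have hsqrt := hasDerivAt_sqrt ha.ne'
  refine HasDerivAt.congr_of_eventuallyEq ?_ hderiv
  refine (((hv a ha).div (hsqrt.const_mul 2) (by positivity)).add (hsqrt.mul hv')).congr_deriv ?_
  have hs : √a ^ 2 = a := sq_sqrt ha.le
  field_simp
  rw [show √a ^ 4 = (√a ^ 2) ^ 2 by ring, hs]
  ring

end SqrtMul

noncomputable def radialEnergy (μ : ℝ) (w w' : ℝ → ℝ) (a : ℝ) : ℝ :=
  w' a ^ 2 / 2 + w a ^ 2 / (8 * a ^ 2) + μ / 2 * w a ^ 2 + w a ^ 4 / (4 * a)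

lemma hasDerivAt_radialEnergy {μ a : ℝ} {w w' : ℝ → ℝ} (ha : 0 < a)
    (hw : HasDerivAt w (w' a) a)
    (hw' : HasDerivAt w' (-(1 / (4 * a ^ 2) + μ) * w a - w a ^ 3 / a) a) :
    HasDerivAt (radialEnergy μ w w') (-w a ^ 2 / (4 * a ^ 3) - w a ^ 4 / (4 * a ^ 2)) a := by
  have h8 : HasDerivAt (fun b : ℝ => 8 * b ^ 2) (8 * (2 * a ^ 1)) a :=
    (hasDerivAt_pow 2 a).const_mul 8
  have h4 : HasDerivAt (fun b : ℝ => 4 * b) (4 * 1) a := (hasDerivAt_id a).const_mul 4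
  refine (((((hw'.pow 2).div_const 2).add ((hw.pow 2).div h8 (by positivity))).add
    ((hw.pow 2).const_mul (μ / 2))).add ((hw.pow 4).div h4 (by positivity))).congr_deriv ?_
  simp only [Pi.pow_apply]
  field_simp
  ring

lemma radialEnergy_dissipation_nonpos {a : ℝ} (ha : 0 < a) (x : ℝ) :
    -x ^ 2 / (4 * a ^ 3) - x ^ 4 / (4 * a ^ 2) ≤ 0 := by
  have h2 : 0 ≤ x ^ 2 / (4 * a ^ 3) := by positivity
  have h4 : 0 ≤ x ^ 4 / (4 * a ^ 2) := by positivity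
  rw [neg_div]
  linarith

theorem stmt3_general (μ : ℝ) (v : ℝ → ℝ)
    (hv : ContDiffOn ℝ 2 v (Set.Ioi 0))
    (hode : ∀ a > (0:ℝ), deriv (deriv v) a + deriv v a / a + μ * v a + (v a) ^ 3 = 0) :
    let w : ℝ → ℝ := fun a => Real.sqrt a * v a
    let E : ℝ → ℝ := fun a =>
      (deriv w a) ^ 2 / 2 + (w a) ^ 2 / (8 * a ^ 2) + μ / 2 * (w a) ^ 2 + (w a) ^ 4 / (4 * a)
    AntitoneOn E (Set.Ioi 0) ∧
    ∀ a > (0:ℝ),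
      deriv E a = -(w a) ^ 2 / (4 * a ^ 3) - (w a) ^ 4 / (4 * a ^ 2) ∧ deriv E a ≤ 0 := by
  intro w E
  have hv₁ (b : ℝ) (hb : 0 < b) := hv.hasDerivAt_of_isOpen two_ne_zero isOpen_Ioi hb
  have hw_ode (a : ℝ) (ha : 0 < a) :
      HasDerivAt (deriv w) (-(1 / (4 * a ^ 2) + μ) * w a - w a ^ 3 / a) a := by
    refine (hasDerivAt_deriv_sqrt_mul ha hv₁
      (hv.hasDerivAt_deriv_of_isOpen le_rfl isOpen_Ioi ha)).congr_deriv ?_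
    rw [show deriv (deriv v) a + deriv v a / a = -(μ * v a) - v a ^ 3 by linarith [hode a ha]]
    have hs : √a ^ 2 = a := sq_sqrt ha.le
    simp only [w]
    field_simp
    rw [hs]
    ring
  have hE (a : ℝ) (ha : 0 < a) :
      HasDerivAt E (-w a ^ 2 / (4 * a ^ 3) - w a ^ 4 / (4 * a ^ 2)) a :=
    hasDerivAt_radialEnergy (w' := deriv w) ha
      (hasDerivAt_sqrt_mul ha (hv₁ a ha)).differentiableAt.hasDerivAt (hw_ode a ha)
  have hdE (a : ℝ) (ha : 0 < a) :
      deriv E a = -w a ^ 2 / (4 * a ^ 3) - w a ^ 4 / (4 * a ^ 2) ∧ deriv E a ≤ 0 := by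
    rw [(hE a ha).deriv]
    exact ⟨rfl, radialEnergy_dissipation_nonpos ha (w a)⟩
  refine ⟨antitoneOn_of_deriv_nonpos (convex_Ioi 0)
    (fun a ha => (hE a ha).continuousAt.continuousWithinAt) ?_ ?_, hdE⟩ <;> rw [interior_Ioi]
  · exact fun a ha => (hE a ha).differentiableAt.differentiableWithinAt
  · exact fun a ha => (hdE a ha).2

/-- Focusing radial standing-wave ODE `v'' + v'/a + μv + v³ = 0`, `μ > 0`:
with `w = √a·v` and `E = ½(w')² + w²/(8a²) + (μ/2)w² + w⁴/(4a)`,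
one has `E' = -w²/(4a³) - w⁴/(4a²) ≤ 0`, so `E` is nonincreasing on `(0,∞)`. -/
theorem stmt3 (μ : ℝ) (hμ : 0 < μ) (v : ℝ → ℝ)
    (hv : ContDiffOn ℝ 2 v (Set.Ioi 0))
    (hode : ∀ a > (0:ℝ), deriv (deriv v) a + deriv v a / a + μ * v a + (v a) ^ 3 = 0)
    (hv0 : ContinuousWithinAt v (Set.Ici 0) 0)
    (hav0 : ContinuousWithinAt (fun a => a * deriv v a) (Set.Ici 0) 0) :
    let w : ℝ → ℝ := fun a => Real.sqrt a * v a
    let E : ℝ → ℝ := fun a =>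
      (deriv w a) ^ 2 / 2 + (w a) ^ 2 / (8 * a ^ 2) + μ / 2 * (w a) ^ 2 + (w a) ^ 4 / (4 * a)
    AntitoneOn E (Set.Ioi 0) ∧
    ∀ a > (0:ℝ),
      deriv E a = -(w a) ^ 2 / (4 * a ^ 3) - (w a) ^ 4 / (4 * a ^ 2) ∧ deriv E a ≤ 0 :=
  stmt3_general μ v hv hode
end

section
/- Let μ > 0 and let v : [0,∞) → ℝ be a C¹ function, C² on (0,∞), solving μv - v'' - v'/a + v³ = 0 for a > 0 with v'(0) = 0. If v is not identically zero, then v is unbounded; more precisely v(a)² ≥ c·log a for some c > 0 and all large a. Consequently, the only bounded solution is v ≡ 0. -/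
open Real Set Filter Topology

/-!
Multiplying the equation by `a v` shows that the flux `F(a) = a v(a) v'(a)` satisfies
`F' = a (v'² + μ v² + v⁴) ≥ 0`, and `F(0⁺) = 0` because `v'(0) = 0`; so `F` is nonnegative and
nondecreasing. If `F` vanished at some `b` beyond a point `a` with `v(a) ≠ 0`, it would vanish on
all of `(0, b]`, forcing `F'(a) = 0`; hence `F ≥ δ > 0` from some point on. Then
`(v²)' = 2F/a ≥ 2δ/a`, and integrating gives `v(a)² ≥ 2δ log a - O(1)`.
-/

lemma monotoneOn_of_forall_hasDerivAt_nonneg {D : Set ℝ} (hD : Convex ℝ D) {f f' : ℝ → ℝ}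
    (hf : ∀ x ∈ D, HasDerivAt f (f' x) x) (hf' : ∀ x ∈ D, 0 ≤ f' x) : MonotoneOn f D :=
  monotoneOn_of_hasDerivWithinAt_nonneg hD
    (fun x hx => (hf x hx).continuousAt.continuousWithinAt)
    (fun x hx => (hf x (interior_subset hx)).hasDerivWithinAt)
    (fun x hx => hf' x (interior_subset hx))

lemma hasDerivAt_deriv_of_contDiffOn_two {v : ℝ → ℝ} {s : Set ℝ} {x : ℝ} (hs : IsOpen s)
    (hv : ContDiffOn ℝ 2 v s) (hx : x ∈ s) :
    HasDerivAt v (deriv v x) x ∧ HasDerivAt (deriv v) (deriv (deriv v) x) x := by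
  have hv' : ContDiffOn ℝ 1 (deriv v) s := hv.deriv_of_isOpen hs (by norm_num)
  exact ⟨((hv.differentiableOn (by norm_num)).differentiableAt (hs.mem_nhds hx)).hasDerivAt,
    ((hv'.differentiableOn one_ne_zero).differentiableAt (hs.mem_nhds hx)).hasDerivAt⟩

lemma exists_pos_ne_zero {v : ℝ → ℝ} (hv : ContinuousWithinAt v (Ici 0) 0)
    (h : ∃ a ≥ (0:ℝ), v a ≠ 0) : ∃ a > (0:ℝ), v a ≠ 0 := by
  by_contra! hzero
  obtain ⟨a, ha, hva⟩ := h
  have hlim : Tendsto v (𝓝[>] 0) (𝓝 (v 0)) :=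
    hv.tendsto.mono_left (nhdsWithin_mono 0 Ioi_subset_Ici_self)
  have hvanish : v =ᶠ[𝓝[>] 0] fun _ => 0 := eventually_mem_nhdsWithin.mono fun a ha => hzero a ha
  have hv0 : v 0 = 0 := tendsto_nhds_unique (hlim.congr' hvanish) tendsto_const_nhds
  rcases ha.eq_or_lt with rfl | hpos
  exacts [hva hv0, hva (hzero a hpos)]

lemma tendsto_atTop_of_mul_log_le {f : ℝ → ℝ} {c A : ℝ} (hc : 0 < c)
    (h : ∀ a ≥ A, c * log a ≤ f a) : Tendsto f atTop atTop :=
  tendsto_atTop_mono' atTop ((eventually_ge_atTop A).mono h)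
    (tendsto_log_atTop.const_mul_atTop hc)

structure IsRadialSolution (μ : ℝ) (v : ℝ → ℝ) : Prop where
  contDiffOn : ContDiffOn ℝ 2 v (Ioi 0)
  ode : ∀ a > (0:ℝ), μ * v a - deriv (deriv v) a - deriv v a / a + v a ^ 3 = 0

noncomputable def radialFlux (v : ℝ → ℝ) (a : ℝ) : ℝ := a * v a * deriv v a

lemma hasDerivAt_radialFlux_of_hasDerivAt {μ a : ℝ} {v : ℝ → ℝ} (ha : a ≠ 0) (hv : HasDerivAt v (deriv v a) a)
    (hv' : HasDerivAt (deriv v) (deriv (deriv v) a) a)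
    (hode : μ * v a - deriv (deriv v) a - deriv v a / a + v a ^ 3 = 0) :
    HasDerivAt (radialFlux v) (a * (deriv v a ^ 2 + μ * v a ^ 2 + v a ^ 4)) a := by
  have hv'' : deriv (deriv v) a = μ * v a + v a ^ 3 - deriv v a / a := by linarith
  refine (((hasDerivAt_id' a).mul hv).mul hv').congr_deriv ?_
  simp only [hv'', Pi.mul_apply]
  field_simp
  ring

lemma mul_inv_le_of_le_radialFlux {v : ℝ → ℝ} {δ a : ℝ} (ha : 0 < a)
    (hδ : δ ≤ radialFlux v a) : 2 * δ * a⁻¹ ≤ 2 * v a * deriv v a := by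
  have hkey : 2 * v a * deriv v a - 2 * δ * a⁻¹ = 2 * a⁻¹ * (radialFlux v a - δ) := by
    unfold radialFlux
    field_simp
  have : 0 ≤ 2 * a⁻¹ * (radialFlux v a - δ) := mul_nonneg (by positivity) (sub_nonneg.mpr hδ)
  linarith

lemma monotoneOn_sq_sub_mul_log {v : ℝ → ℝ} {δ a₀ : ℝ} (ha₀ : 0 < a₀)
    (hv : ∀ a ≥ a₀, HasDerivAt v (deriv v a) a) (hδ : ∀ a ≥ a₀, δ ≤ radialFlux v a) :
    MonotoneOn (fun a => v a ^ 2 - 2 * δ * log a) (Ici a₀) := by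
  refine monotoneOn_of_forall_hasDerivAt_nonneg (convex_Ici a₀)
    (fun a ha => ((hv a ha).pow 2).sub ((hasDerivAt_log (ha₀.trans_le ha).ne').const_mul _))
    fun a (ha : a₀ ≤ a) => ?_
  simpa using sub_nonneg.mpr (mul_inv_le_of_le_radialFlux (ha₀.trans_le ha) (hδ a ha))

lemma exists_mul_log_le_sq_of_le_radialFlux {v : ℝ → ℝ} {δ a₀ : ℝ} (ha₀ : 0 < a₀) (hδ₀ : 0 < δ)
    (hv : ∀ a ≥ a₀, HasDerivAt v (deriv v a) a) (hδ : ∀ a ≥ a₀, δ ≤ radialFlux v a) :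
    ∃ A : ℝ, ∀ a ≥ A, δ * log a ≤ v a ^ 2 := by
  refine ⟨max a₀ (exp (2 * log a₀)), fun a ha => ?_⟩
  have ha₀a : a₀ ≤ a := (le_max_left _ _).trans ha
  have hmono := monotoneOn_sq_sub_mul_log ha₀ hv hδ self_mem_Ici ha₀a ha₀a
  have hlog : 2 * log a₀ ≤ log a := by
    rw [← log_exp (2 * log a₀)]
    exact log_le_log (exp_pos _) ((le_max_right _ _).trans ha)
  nlinarith [sq_nonneg (v a₀)]

namespace IsRadialSolution

variable {μ : ℝ} {v : ℝ → ℝ}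

lemma hasDerivAt (hv : IsRadialSolution μ v) {a : ℝ} (ha : 0 < a) :
    HasDerivAt v (deriv v a) a :=
  (hasDerivAt_deriv_of_contDiffOn_two isOpen_Ioi hv.contDiffOn ha).1

lemma hasDerivAt_radialFlux (hv : IsRadialSolution μ v) {a : ℝ} (ha : 0 < a) :
    HasDerivAt (radialFlux v) (a * (deriv v a ^ 2 + μ * v a ^ 2 + v a ^ 4)) a :=
  have hd := hasDerivAt_deriv_of_contDiffOn_two isOpen_Ioi hv.contDiffOn ha
  hasDerivAt_radialFlux_of_hasDerivAt ha.ne' hd.1 hd.2 (hv.ode a ha)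

lemma monotoneOn_radialFlux (hμ : 0 < μ) (hv : IsRadialSolution μ v) :
    MonotoneOn (radialFlux v) (Ioi 0) :=
  monotoneOn_of_forall_hasDerivAt_nonneg (convex_Ioi 0)
    (fun _ ha => hv.hasDerivAt_radialFlux ha) (fun a (ha : 0 < a) => by positivity)

lemma tendsto_radialFlux_nhdsGT_zero (hv1 : ContDiffOn ℝ 1 v (Ici 0))
    (hv'0 : derivWithin v (Ici 0) 0 = 0) : Tendsto (radialFlux v) (𝓝[>] 0) (𝓝 0) := by
  have hv' : Tendsto (derivWithin v (Ici 0)) (𝓝[>] 0) (𝓝 0) := by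
    have h := hv1.continuousOn_derivWithin (uniqueDiffOn_Ici 0) le_rfl 0 self_mem_Ici
    rw [ContinuousWithinAt, hv'0] at h
    exact h.mono_left (nhdsWithin_mono 0 Ioi_subset_Ici_self)
  have hderiv : derivWithin v (Ici 0) =ᶠ[𝓝[>] 0] deriv v :=
    eventually_mem_nhdsWithin.mono fun a (ha : 0 < a) =>
      derivWithin_of_mem_nhds (mem_of_superset (Ioi_mem_nhds ha) Ioi_subset_Ici_self)
  have hv : Tendsto v (𝓝[>] 0) (𝓝 (v 0)) :=
    (hv1.continuousOn 0 self_mem_Ici).tendsto.mono_left (nhdsWithin_mono 0 Ioi_subset_Ici_self)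
  unfold radialFlux
  simpa using ((tendsto_nhdsWithin_of_tendsto_nhds tendsto_id).mul hv).mul (hv'.congr' hderiv)

lemma radialFlux_nonneg (hμ : 0 < μ) (hv : IsRadialSolution μ v)
    (hv1 : ContDiffOn ℝ 1 v (Ici 0)) (hv'0 : derivWithin v (Ici 0) 0 = 0) {a : ℝ} (ha : 0 < a) :
    0 ≤ radialFlux v a :=
  le_of_tendsto (tendsto_radialFlux_nhdsGT_zero hv1 hv'0) <|
    eventually_of_mem (Ioc_mem_nhdsGT ha) fun _ ht => hv.monotoneOn_radialFlux hμ ht.1 ha ht.2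

lemma radialFlux_pos (hμ : 0 < μ) (hv : IsRadialSolution μ v)
    (hv1 : ContDiffOn ℝ 1 v (Ici 0)) (hv'0 : derivWithin v (Ici 0) 0 = 0) {a b : ℝ}
    (ha : 0 < a) (hab : a < b) (hva : v a ≠ 0) : 0 < radialFlux v b := by
  refine (hv.radialFlux_nonneg hμ hv1 hv'0 (ha.trans hab)).lt_of_ne fun hb => ?_
  have hflat : radialFlux v =ᶠ[𝓝 a] fun _ => 0 :=
    eventually_of_mem (Ioo_mem_nhds ha hab) fun t ht => le_antisymm
      (hb ▸ hv.monotoneOn_radialFlux hμ ht.1 (ha.trans hab) ht.2.le)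
      (hv.radialFlux_nonneg hμ hv1 hv'0 ht.1)
  have hderiv := (hv.hasDerivAt_radialFlux ha).unique
    ((hasDerivAt_const a (0:ℝ)).congr_of_eventuallyEq hflat)
  have : 0 < a * (deriv v a ^ 2 + μ * v a ^ 2 + v a ^ 4) := by positivity
  exact this.ne' hderiv

lemma exists_pos_mul_log_le_sq (hμ : 0 < μ) (hv : IsRadialSolution μ v)
    (hv1 : ContDiffOn ℝ 1 v (Ici 0)) (hv'0 : derivWithin v (Ici 0) 0 = 0) {a : ℝ}
    (ha : 0 < a) (hva : v a ≠ 0) : ∃ c > (0:ℝ), ∃ A : ℝ, ∀ a ≥ A, c * log a ≤ v a ^ 2 := by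
  have ha₁ : 0 < a + 1 := by linarith
  have hpos : 0 < radialFlux v (a + 1) := hv.radialFlux_pos hμ hv1 hv'0 ha (lt_add_one a) hva
  exact ⟨_, hpos, exists_mul_log_le_sq_of_le_radialFlux ha₁ hpos
    (fun b hb => hv.hasDerivAt (ha₁.trans_le hb))
    (fun b hb => hv.monotoneOn_radialFlux hμ ha₁ (ha₁.trans_le hb) hb)⟩

end IsRadialSolution

/-- Defocusing radial standing-wave equation `μv - v'' - v'/a + v³ = 0` with `μ > 0`:
any solution not identically zero on `[0,∞)` satisfies `v(a)² ≥ c·log a` for large `a`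
(hence is unbounded); consequently the only bounded solution is `v ≡ 0`. -/
theorem stmt5 (μ : ℝ) (hμ : 0 < μ) (v : ℝ → ℝ)
    (hv1 : ContDiffOn ℝ 1 v (Set.Ici 0))
    (hv2 : ContDiffOn ℝ 2 v (Set.Ioi 0))
    (hode : ∀ a > (0:ℝ), μ * v a - deriv (deriv v) a - deriv v a / a + (v a) ^ 3 = 0)
    (hv'0 : derivWithin v (Set.Ici 0) 0 = 0) :
    ((∃ a ≥ (0:ℝ), v a ≠ 0) →
      ∃ c > (0:ℝ), ∃ A : ℝ, ∀ a ≥ A, c * Real.log a ≤ (v a) ^ 2) ∧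
    ((∃ C : ℝ, ∀ a ≥ (0:ℝ), |v a| ≤ C) → ∀ a ≥ (0:ℝ), v a = 0) := by
  have hv : IsRadialSolution μ v := ⟨hv2, hode⟩
  have growth : (∃ a ≥ (0:ℝ), v a ≠ 0) →
      ∃ c > (0:ℝ), ∃ A : ℝ, ∀ a ≥ A, c * Real.log a ≤ (v a) ^ 2 := fun h =>
    let ⟨_, ha, hva⟩ := exists_pos_ne_zero (hv1.continuousOn 0 self_mem_Ici) h
    hv.exists_pos_mul_log_le_sq hμ hv1 hv'0 ha hva
  refine ⟨growth, fun ⟨C, hC⟩ a ha => ?_⟩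
  by_contra hva
  obtain ⟨c, hc, A, hA⟩ := growth ⟨a, ha, hva⟩
  obtain ⟨b, hbC, hb⟩ := (((tendsto_atTop_of_mul_log_le hc hA).eventually_gt_atTop (C ^ 2)).and
    (eventually_ge_atTop 0)).exists
  have hvb := abs_le.mp (hC b hb)
  nlinarith [sq_le_sq' hvb.1 hvb.2]
end

section
/- Let v : [0,∞) → ℝ solve v'' + v'/a + v³ = 0 on (0,∞) (the μ = 0 focusing case), continuous at 0 with a·v'(a) → 0 as a → 0⁺. Set w(a) = a^{1/3} v(a) and G(a) = ½a^{2/3}(w')² + ¼w⁴ + (1/18)a^{-4/3}w². Then G'(a) = -(2/27)a^{-7/3} w² ≤ 0; consequently w = O(1) and v(a) = O(a^{-1/3}), v'(a) = O(a^{-2/3}) as a → ∞. -/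
/-!
With `w = a^{1/3} v`, the energy `G` differentiates, modulo the equation, to
`-(2/27) a^{-7/3} w² ≤ 0`: the terms of `G'` that do not contain `v'' + v'/a + v³` cancel. So `G`
is nonincreasing on `(0, ∞)` and `G a ≤ G 1` for `a ≥ 1`. Each of the three nonnegative terms of
`G` is then bounded by `G 1`, which bounds `w` and `a^{1/3} w'`; since `v = a^{-1/3} w` and
`v' = a^{-1/3} w' - ⅓ a^{-4/3} w`, this gives the decay of `v` and `v'`.
-/

open Real Set Filter

noncomputable def rescaled (v : ℝ → ℝ) (a : ℝ) : ℝ := a ^ ((1:ℝ)/3) * v a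

noncomputable def energy (v : ℝ → ℝ) (a : ℝ) : ℝ :=
  a ^ ((2:ℝ)/3) * (deriv (rescaled v) a) ^ 2 / 2 + (rescaled v a) ^ 4 / 4
    + a ^ (-(4:ℝ)/3) * (rescaled v a) ^ 2 / 18

lemma exists_cube_eq {a : ℝ} (ha : 0 < a) : ∃ t > 0, a = t ^ 3 :=
  ⟨a ^ ((1:ℝ)/3), by positivity, by rw [← rpow_natCast, ← rpow_mul ha.le]; norm_num⟩

variable {v : ℝ → ℝ} {a : ℝ}

lemma hasDerivAt_rescaled {v' : ℝ} (hv : HasDerivAt v v' a) (ha : 0 < a) :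
    HasDerivAt (rescaled v) (1/3 * a ^ ((1:ℝ)/3 - 1) * v a + a ^ ((1:ℝ)/3) * v') a :=
  (hasDerivAt_rpow_const (Or.inl ha.ne')).mul hv

lemma hasDerivAt_energy (hv : ContDiffOn ℝ 2 v (Ioi 0)) (ha : 0 < a) :
    HasDerivAt (energy v)
      (-(2/27) * a ^ (-(7:ℝ)/3) * (rescaled v a) ^ 2
        + (a ^ ((4:ℝ)/3) * deriv v a + a ^ ((1:ℝ)/3) * v a / 3)
          * (deriv (deriv v) a + deriv v a / a + (v a) ^ 3)) a := by
  have hv' : ∀ x ∈ Ioi (0:ℝ), HasDerivAt v (deriv v x) x := fun x hx =>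
    ((hv.differentiableOn two_ne_zero).differentiableAt (Ioi_mem_nhds hx)).hasDerivAt
  have hv'' : HasDerivAt (deriv v) (deriv (deriv v) a) a :=
    (((hv.deriv_of_isOpen (m := 1) isOpen_Ioi (by norm_num)).differentiableOn
      one_ne_zero).differentiableAt (Ioi_mem_nhds ha)).hasDerivAt
  have hw'_eq : deriv (rescaled v) =ᶠ[nhds a]
      fun x => 1/3 * x ^ ((1:ℝ)/3 - 1) * v x + x ^ ((1:ℝ)/3) * deriv v x := by
    filter_upwards [Ioi_mem_nhds ha] with x hx using (hasDerivAt_rescaled (hv' x hx) hx).deriv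
  have hpow (p : ℝ) := hasDerivAt_rpow_const (x := a) (p := p) (Or.inl ha.ne')
  have hw := hasDerivAt_rescaled (hv' a ha) ha
  have hw'' : HasDerivAt
      (fun x => 1/3 * x ^ ((1:ℝ)/3 - 1) * v x + x ^ ((1:ℝ)/3) * deriv v x) _ a :=
    (((hpow _).const_mul (1/3)).mul (hv' a ha)).add ((hpow _).mul hv'')
  have hG := ((((hpow ((2:ℝ)/3)).mul (hw''.pow 2)).div_const 2).add
    ((hw.pow 4).div_const 4)).add (((hpow (-(4:ℝ)/3)).mul (hw.pow 2)).div_const 18)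
  refine (hG.congr_of_eventuallyEq ?_).congr_deriv ?_
  · filter_upwards [hw'_eq] with x hx
    simp only [energy, hx, Pi.add_apply, Pi.mul_apply, Pi.pow_apply]
  · -- with `a = t³` every power `a^{k/3}` becomes `t^k`
    obtain ⟨t, ht, rfl⟩ := exists_cube_eq ha
    simp only [rescaled, Pi.pow_apply, ← rpow_natCast_mul ht.le]
    norm_num [rpow_neg_one]
    field_simp
    ring

lemma hasDerivAt_energy_of_ode (hv : ContDiffOn ℝ 2 v (Ioi 0))
    (hode : ∀ a > (0:ℝ), deriv (deriv v) a + deriv v a / a + (v a) ^ 3 = 0) (ha : 0 < a) :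
    HasDerivAt (energy v) (-(2/27) * a ^ (-(7:ℝ)/3) * (rescaled v a) ^ 2) a := by
  simpa [hode a ha] using hasDerivAt_energy hv ha

lemma deriv_energy_nonpos (hv : ContDiffOn ℝ 2 v (Ioi 0))
    (hode : ∀ a > (0:ℝ), deriv (deriv v) a + deriv v a / a + (v a) ^ 3 = 0) (ha : 0 < a) :
    deriv (energy v) a ≤ 0 := by
  rw [(hasDerivAt_energy_of_ode hv hode ha).deriv]
  nlinarith [mul_nonneg (rpow_nonneg ha.le (-(7:ℝ)/3)) (sq_nonneg (rescaled v a))]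

lemma antitoneOn_energy (hv : ContDiffOn ℝ 2 v (Ioi 0))
    (hode : ∀ a > (0:ℝ), deriv (deriv v) a + deriv v a / a + (v a) ^ 3 = 0) :
    AntitoneOn (energy v) (Ioi 0) := by
  have hdiff : DifferentiableOn ℝ (energy v) (Ioi 0) := fun x hx =>
    (hasDerivAt_energy_of_ode hv hode hx).differentiableAt.differentiableWithinAt
  refine antitoneOn_of_deriv_nonpos (convex_Ioi 0) hdiff.continuousOn ?_ ?_ <;>
    rw [interior_Ioi]
  exacts [hdiff, fun x hx => deriv_energy_nonpos hv hode hx]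

lemma energy_cube_eq {t : ℝ} (hv : DifferentiableAt ℝ v (t ^ 3)) (ht : 0 < t) :
    energy v (t ^ 3) = t ^ 2 * (v (t ^ 3) / (3 * t ^ 2) + t * deriv v (t ^ 3)) ^ 2 / 2
      + (t * v (t ^ 3)) ^ 4 / 4 + (t * v (t ^ 3)) ^ 2 / (18 * t ^ 4) := by
  rw [energy, (hasDerivAt_rescaled hv.hasDerivAt (by positivity)).deriv, rescaled]
  simp only [← rpow_natCast_mul ht.le]
  norm_num
  field_simp

lemma abs_le_one_add_of_pow_four_le {x c : ℝ} (h : x ^ 4 ≤ c) : |x| ≤ 1 + c := by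
  rcases le_or_gt |x| 1 with hx | hx
  · have : 0 ≤ x ^ 4 := by positivity
    linarith
  · calc |x| ≤ |x| ^ 4 := le_self_pow₀ hx.le (by norm_num)
      _ = x ^ 4 := by rw [pow_abs, abs_of_nonneg (by positivity)]
      _ ≤ 1 + c := by linarith

lemma bounds_of_energy_le {t x y B C : ℝ} (ht : 1 ≤ t)
    (hE : t ^ 2 * (x / (3 * t ^ 2) + t * y) ^ 2 / 2 + (t * x) ^ 4 / 4
      + (t * x) ^ 2 / (18 * t ^ 4) ≤ B)
    (hC : 1 + 4 * B + √(2 * B) ≤ C) :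
    |t * x| ≤ C ∧ |x| ≤ C / t ∧ |y| ≤ C / t ^ 2 := by
  have ht0 : 0 < t := one_pos.trans_le ht
  set w := t * x
  set p := x / (3 * t ^ 2) + t * y
  have hw4 : w ^ 4 ≤ 4 * B := by
    have : 0 ≤ t ^ 2 * p ^ 2 / 2 := by positivity
    have : 0 ≤ w ^ 2 / (18 * t ^ 4) := by positivity
    linarith
  have hw : |w| ≤ 1 + 4 * B := abs_le_one_add_of_pow_four_le hw4
  have htp : |t * p| ≤ √(2 * B) := by
    refine abs_le_sqrt ?_
    have : 0 ≤ w ^ 4 / 4 := by positivity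
    have : 0 ≤ w ^ 2 / (18 * t ^ 4) := by positivity
    linarith
  have hsqrt := sqrt_nonneg (2 * B)
  have hx : x = w / t := (mul_div_cancel_left₀ x ht0.ne').symm
  have hy : y = t * p / t ^ 2 - w / (3 * t ^ 4) := by
    simp only [w, p]
    field_simp
    ring
  refine ⟨by linarith, ?_, ?_⟩
  · rw [hx, abs_div, abs_of_pos ht0]
    gcongr
    linarith
  · have h4 : 1 / (3 * t ^ 4) ≤ 1 / t ^ 2 := by
      gcongr
      nlinarith [one_le_pow₀ (n := 2) ht]
    calc |y| ≤ |t * p| / t ^ 2 + |w| / (3 * t ^ 4) := by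
          rw [hy]
          refine (abs_sub _ _).trans_eq ?_
          rw [abs_div, abs_div, abs_of_pos (by positivity : (0:ℝ) < t ^ 2),
            abs_of_pos (by positivity : (0:ℝ) < 3 * t ^ 4)]
      _ ≤ √(2 * B) / t ^ 2 + (1 + 4 * B) / t ^ 2 := by
          rw [div_eq_mul_one_div |w|, div_eq_mul_one_div (1 + 4 * B)]
          gcongr
          linarith [abs_nonneg w]
      _ ≤ C / t ^ 2 := by rw [← add_div]; gcongr; linarith

theorem stmt6_general (v : ℝ → ℝ)
    (hv : ContDiffOn ℝ 2 v (Set.Ioi 0))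
    (hode : ∀ a > (0:ℝ), deriv (deriv v) a + deriv v a / a + (v a) ^ 3 = 0) :
    let w : ℝ → ℝ := fun a => a ^ ((1:ℝ)/3) * v a
    let G : ℝ → ℝ := fun a =>
      a ^ ((2:ℝ)/3) * (deriv w a) ^ 2 / 2 + (w a) ^ 4 / 4 + a ^ (-(4:ℝ)/3) * (w a) ^ 2 / 18
    (∀ a > (0:ℝ), deriv G a = -(2/27) * a ^ (-(7:ℝ)/3) * (w a) ^ 2 ∧ deriv G a ≤ 0) ∧
    ∃ C : ℝ, ∀ a ≥ (1:ℝ),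
      |w a| ≤ C ∧ |v a| ≤ C * a ^ (-(1:ℝ)/3) ∧ |deriv v a| ≤ C * a ^ (-(2:ℝ)/3) := by
  intro w G
  refine ⟨fun a ha =>
    ⟨(hasDerivAt_energy_of_ode hv hode ha).deriv, deriv_energy_nonpos hv hode ha⟩, 1 + 4 * energy v 1 + √(2 * energy v 1), fun a ha => ?_⟩
  obtain ⟨t, ht, rfl⟩ := exists_cube_eq (one_pos.trans_le ha)
  have ht1 : 1 ≤ t := (one_le_pow_iff_of_nonneg ht.le three_ne_zero).1 ha
  have hv' : DifferentiableAt ℝ v (t ^ 3) :=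
    (hv.differentiableOn two_ne_zero).differentiableAt (Ioi_mem_nhds (by positivity))
  have hE : energy v (t ^ 3) ≤ energy v 1 :=
    antitoneOn_energy hv hode (mem_Ioi.2 one_pos) (mem_Ioi.2 (by positivity)) ha
  rw [energy_cube_eq hv' ht] at hE
  have hcube (q : ℝ) : (t ^ 3) ^ (q / 3) = t ^ q := by
    rw [← rpow_natCast_mul ht.le]
    ring_nf
  simpa only [w, hcube, rpow_one, rpow_neg ht.le, rpow_two, ← div_eq_mul_inv] using
    bounds_of_energy_le ht1 hE le_rfl

/-- The `μ = 0` focusing equation `v'' + v'/a + v³ = 0`: with `w = a^{1/3} v` and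
`G = ½a^{2/3}(w')² + ¼w⁴ + (1/18)a^{-4/3}w²` one has `G' = -(2/27)a^{-7/3}w² ≤ 0`;
consequently `w = O(1)`, `v = O(a^{-1/3})` and `v' = O(a^{-2/3})` as `a → ∞`. -/
theorem stmt6 (v : ℝ → ℝ)
    (hv : ContDiffOn ℝ 2 v (Set.Ioi 0))
    (hode : ∀ a > (0:ℝ), deriv (deriv v) a + deriv v a / a + (v a) ^ 3 = 0)
    (hv0 : ContinuousWithinAt v (Set.Ici 0) 0)
    (hav0 : Filter.Tendsto (fun a => a * deriv v a) (nhdsWithin 0 (Set.Ioi 0)) (nhds 0)) :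
    let w : ℝ → ℝ := fun a => a ^ ((1:ℝ)/3) * v a
    let G : ℝ → ℝ := fun a =>
      a ^ ((2:ℝ)/3) * (deriv w a) ^ 2 / 2 + (w a) ^ 4 / 4 + a ^ (-(4:ℝ)/3) * (w a) ^ 2 / 18
    (∀ a > (0:ℝ), deriv G a = -(2/27) * a ^ (-(7:ℝ)/3) * (w a) ^ 2 ∧ deriv G a ≤ 0) ∧
    ∃ C : ℝ, ∀ a ≥ (1:ℝ),
      |w a| ≤ C ∧ |v a| ≤ C * a ^ (-(1:ℝ)/3) ∧ |deriv v a| ≤ C * a ^ (-(2:ℝ)/3) :=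
  stmt6_general v hv hode
end

section
/- Let v : [0,∞) → ℝ be C¹ with v'(0) = 0, C² on (0,∞), solving the defocusing equation -v + v'' + v'/a - v³ = 0 (i.e., μ = -1 case of (D): μv - v'' - v'/a + v³ = 0). If v(0) > 1, then v(a) > 1 for all a > 0, and v(a)² ≥ c·log a for some c > 0 for large a; in particular v is unbounded. -/
open Real Set Filter Topology

/-!
With `w a = a * v' a` the equation reads `w' a = a * (v a ^ 3 - v a)`, and `w → 0` at `0⁺`.
As long as `v > 1`, `w` increases from `0`, so `v' > 0` and `v` stays above `v 0 > 1`: hence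
`v > 1` on `(0, ∞)`. Then `v` is increasing, so `v ^ 3 - v ≥ m := v 1 ^ 3 - v 1 > 0` on
`[1, ∞)`; thus `w` grows linearly, `v'` is eventually at least `m / 2`, `v` grows linearly,
and `v a ^ 2 ≳ a ^ 2 ≥ log a`.
-/

lemma cube_sub_self_pos {x : ℝ} (hx : 1 < x) : 0 < x ^ 3 - x := by
  have : 0 < x * (x - 1) * (x + 1) := by
    apply mul_pos (mul_pos _ _) <;> linarith
  linarith [show x ^ 3 - x = x * (x - 1) * (x + 1) by ring]

lemma cube_sub_self_le_of_le {x y : ℝ} (hx : 1 ≤ x) (hxy : x ≤ y) : x ^ 3 - x ≤ y ^ 3 - y := by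
  nlinarith [mul_nonneg (sub_nonneg.mpr hxy) (by nlinarith : (0:ℝ) ≤ y ^ 2 + y * x + x ^ 2 - 1)]

lemma mul_sub_le_sub_of_le_hasDerivAt {g g' : ℝ → ℝ} {x₀ C a : ℝ}
    (hg : ∀ x ≥ x₀, HasDerivAt g (g' x) x) (hC : ∀ x > x₀, C ≤ g' x) (ha : x₀ ≤ a) :
    C * (a - x₀) ≤ g a - g x₀ := by
  refine (convex_Ici x₀).mul_sub_le_image_sub_of_le_deriv
    (fun x hx => (hg x hx).continuousAt.continuousWithinAt) (fun x hx => ?_) (fun x hx => ?_)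
    x₀ self_mem_Ici a ha ha
  · rw [interior_Ici] at hx
    exact (hg x (le_of_lt hx)).differentiableAt.differentiableWithinAt
  · rw [interior_Ici] at hx
    rw [(hg x (le_of_lt hx)).deriv]
    exact hC x hx

lemma StrictMonoOn.pos_of_tendsto_nhdsGT_zero {w : ℝ → ℝ} {t a : ℝ}
    (hw : StrictMonoOn w (Ioo 0 t)) (hlim : Tendsto w (𝓝[>] 0) (𝓝 0)) (ha : a ∈ Ioo 0 t) :
    0 < w a := by
  have ha2 : a / 2 ∈ Ioo 0 t := ⟨by linarith [ha.1], by linarith [ha.1, ha.2]⟩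
  have hle : 0 ≤ w (a / 2) := by
    refine le_of_tendsto hlim ?_
    filter_upwards [Ioo_mem_nhdsGT ha2.1] with s hs
    exact (hw ⟨hs.1, hs.2.trans ha2.2⟩ ha2 hs.2).le
  exact hle.trans_lt (hw ha2 ha (by linarith [ha.1]))

lemma forall_lt_of_deriv_pos_while_lt {v : ℝ → ℝ} {c : ℝ} (hvc : ContinuousOn v (Ici 0))
    (hderiv : ∀ t, (∀ s ∈ Ioo 0 t, c < v s) → ∀ s ∈ Ioo 0 t, 0 < deriv v s)
    (h0 : c < v 0) {a : ℝ} (ha : 0 < a) : c < v a := by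
  by_contra! hva
  set K := Icc 0 a ∩ v ⁻¹' Iic c
  have hK : IsCompact K := isCompact_Icc.of_isClosed_subset
    ((hvc.mono Icc_subset_Ici_self).preimage_isClosed_of_isClosed isClosed_Icc isClosed_Iic)
    inter_subset_left
  obtain ⟨t, ⟨⟨ht0, hta⟩, hvt⟩, htmin⟩ := hK.exists_isLeast ⟨a, ⟨ha.le, le_rfl⟩, hva⟩
  have htpos : 0 < t := ht0.lt_of_ne (by rintro rfl; exact h0.not_ge hvt)
  have hbefore : ∀ s ∈ Ioo 0 t, c < v s := fun s hs => by
    by_contra! hvs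
    exact (htmin ⟨⟨hs.1.le, hs.2.le.trans hta⟩, hvs⟩).not_gt hs.2
  have hmono : StrictMonoOn v (Icc 0 t) :=
    strictMonoOn_of_deriv_pos (convex_Icc 0 t) (hvc.mono Icc_subset_Ici_self)
      (fun s hs => hderiv t hbefore s (by rwa [interior_Icc] at hs))
  have hvt : v t ≤ c := hvt
  linarith [hmono (left_mem_Icc.mpr ht0) (right_mem_Icc.mpr ht0) htpos]

lemma mul_log_le_sq_of_mul_le {c a y : ℝ} (hc : 0 ≤ c) (ha : 1 ≤ a) (hy : c * a ≤ y) :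
    c ^ 2 * log a ≤ y ^ 2 := by
  have hlog : log a ≤ a ^ 2 := by
    nlinarith [log_le_sub_one_of_pos (by linarith : (0:ℝ) < a)]
  calc c ^ 2 * log a ≤ c ^ 2 * a ^ 2 := by gcongr
    _ = (c * a) ^ 2 := by ring
    _ ≤ y ^ 2 := pow_le_pow_left₀ (by positivity) hy 2

section RadialODE

variable {v : ℝ → ℝ}

lemma hasDerivAt_mul_deriv (hv2 : ContDiffOn ℝ 2 v (Ioi 0))
    (hode : ∀ a > (0:ℝ), deriv (deriv v) a + deriv v a / a = (v a) ^ 3 - v a)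
    {a : ℝ} (ha : 0 < a) :
    HasDerivAt (fun x => x * deriv v x) (a * (v a ^ 3 - v a)) a := by
  have hdd : HasDerivAt (deriv v) (deriv (deriv v) a) a :=
    (((hv2.deriv_of_isOpen isOpen_Ioi (by norm_num)).differentiableOn one_ne_zero).differentiableAt
      (Ioi_mem_nhds ha)).hasDerivAt
  refine ((hasDerivAt_id a).mul hdd).congr_deriv ?_
  rw [← hode a ha, id]
  field_simp
  ring

lemma tendsto_mul_deriv_nhdsGT_zero (hv1 : ContDiffOn ℝ 1 v (Ici 0))
    (hv'0 : derivWithin v (Ici 0) 0 = 0) :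
    Tendsto (fun x => x * deriv v x) (𝓝[>] 0) (𝓝 0) := by
  have hcont : Tendsto (derivWithin v (Ici 0)) (𝓝[>] 0) (𝓝 0) := by
    have := ((hv1.continuousOn_derivWithin (uniqueDiffOn_Ici 0) le_rfl) 0 self_mem_Ici).tendsto
    rw [hv'0] at this
    exact this.mono_left (nhdsWithin_mono 0 Ioi_subset_Ici_self)
  have hprod : Tendsto (fun x => x * derivWithin v (Ici 0) x) (𝓝[>] 0) (𝓝 0) := by
    simpa using (tendsto_nhdsWithin_of_tendsto_nhds tendsto_id).mul hcont
  refine hprod.congr' ?_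
  filter_upwards [self_mem_nhdsWithin] with x hx
  rw [derivWithin_of_mem_nhds (Ici_mem_nhds hx)]

lemma deriv_pos_of_forall_one_lt (hv2 : ContDiffOn ℝ 2 v (Ioi 0))
    (hode : ∀ a > (0:ℝ), deriv (deriv v) a + deriv v a / a = (v a) ^ 3 - v a)
    (hlim : Tendsto (fun x => x * deriv v x) (𝓝[>] 0) (𝓝 0))
    {t : ℝ} (hvt : ∀ s ∈ Ioo 0 t, 1 < v s) {a : ℝ} (ha : a ∈ Ioo 0 t) : 0 < deriv v a := by
  have hmono : StrictMonoOn (fun x => x * deriv v x) (Ioo 0 t) :=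
    strictMonoOn_of_deriv_pos (convex_Ioo 0 t)
      (fun x hx => (hasDerivAt_mul_deriv hv2 hode hx.1).continuousAt.continuousWithinAt)
      (fun x hx => by
        rw [interior_Ioo] at hx
        rw [(hasDerivAt_mul_deriv hv2 hode hx.1).deriv]
        exact mul_pos hx.1 (cube_sub_self_pos (hvt x hx)))
  exact pos_of_mul_pos_right (hmono.pos_of_tendsto_nhdsGT_zero hlim ha) ha.1.le

lemma half_le_deriv_of_forall_one_lt (hv2 : ContDiffOn ℝ 2 v (Ioi 0))
    (hode : ∀ a > (0:ℝ), deriv (deriv v) a + deriv v a / a = (v a) ^ 3 - v a)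
    (hlim : Tendsto (fun x => x * deriv v x) (𝓝[>] 0) (𝓝 0))
    (hgt : ∀ a > 0, 1 < v a) {a : ℝ} (ha : 2 ≤ a) :
    (v 1 ^ 3 - v 1) / 2 ≤ deriv v a := by
  set m := v 1 ^ 3 - v 1
  have hm : 0 < m := cube_sub_self_pos (hgt 1 one_pos)
  have hderiv : ∀ x > 0, 0 < deriv v x := fun x hx =>
    deriv_pos_of_forall_one_lt hv2 hode hlim (t := x + 1) (fun s hs => hgt s hs.1) ⟨hx, by linarith⟩
  have hmono : MonotoneOn v (Ici 1) :=
    (strictMonoOn_of_deriv_pos (convex_Ici 1)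
      (hv2.continuousOn.mono fun x (hx : 1 ≤ x) => (by linarith : (0:ℝ) < x))
      (fun x hx => hderiv x (by rw [interior_Ici] at hx; exact zero_lt_one.trans hx))).monotoneOn
  have hgrowth : m * (a - 1) ≤ a * deriv v a - 1 * deriv v 1 :=
    mul_sub_le_sub_of_le_hasDerivAt (fun x (hx : x ≥ 1) => hasDerivAt_mul_deriv hv2 hode (by linarith))
      (fun x (hx : x > 1) => by
        have := cube_sub_self_le_of_le (hgt 1 one_pos).le (hmono self_mem_Ici hx.le hx.le)
        nlinarith) (by linarith)
  have := hderiv 1 one_pos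
  nlinarith

lemma exists_mul_le_of_forall_one_lt (hv2 : ContDiffOn ℝ 2 v (Ioi 0))
    (hode : ∀ a > (0:ℝ), deriv (deriv v) a + deriv v a / a = (v a) ^ 3 - v a)
    (hlim : Tendsto (fun x => x * deriv v x) (𝓝[>] 0) (𝓝 0))
    (hgt : ∀ a > 0, 1 < v a) : ∃ c > 0, ∀ a ≥ 4, c * a ≤ v a := by
  set m := v 1 ^ 3 - v 1
  refine ⟨m / 4, by have := cube_sub_self_pos (hgt 1 one_pos); positivity, fun a ha => ?_⟩
  have hlin : m / 2 * (a - 2) ≤ v a - v 2 :=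
    mul_sub_le_sub_of_le_hasDerivAt
      (fun x (hx : x ≥ 2) => ((hv2.differentiableOn (by norm_num)).differentiableAt
        (Ioi_mem_nhds (by linarith))).hasDerivAt)
      (fun x hx => half_le_deriv_of_forall_one_lt hv2 hode hlim hgt hx.le) (by linarith)
  have := hgt 2 two_pos
  have := cube_sub_self_pos (hgt 1 one_pos)
  nlinarith

end RadialODE

/-- Defocusing equation with `μ = -1`: `v'' + v'/a = v³ - v`. If `v(0) > 1` then
`v(a) > 1` for all `a > 0` and `v(a)² ≥ c·log a` for large `a`; in particular `v`
is unbounded. -/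
theorem stmt7 (v : ℝ → ℝ)
    (hv1 : ContDiffOn ℝ 1 v (Set.Ici 0))
    (hv2 : ContDiffOn ℝ 2 v (Set.Ioi 0))
    (hode : ∀ a > (0:ℝ), deriv (deriv v) a + deriv v a / a = (v a) ^ 3 - v a)
    (hv'0 : derivWithin v (Set.Ici 0) 0 = 0)
    (h0 : 1 < v 0) :
    (∀ a > (0:ℝ), 1 < v a) ∧
    ∃ c > (0:ℝ), ∃ A : ℝ, ∀ a ≥ A, c * Real.log a ≤ (v a) ^ 2 := by
  have hlim := tendsto_mul_deriv_nhdsGT_zero hv1 hv'0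
  have hgt : ∀ a > (0:ℝ), 1 < v a := fun a ha =>
    forall_lt_of_deriv_pos_while_lt hv1.continuousOn
      (fun _ hvt _ hs => deriv_pos_of_forall_one_lt hv2 hode hlim hvt hs) h0 ha
  obtain ⟨c, hc, hlin⟩ := exists_mul_le_of_forall_one_lt hv2 hode hlim hgt
  exact ⟨hgt, c ^ 2, by positivity, 4, fun a ha =>
    mul_log_le_sq_of_mul_le hc.le (by linarith) (hlin a ha)⟩
end

section
/- Consider the self-similar focusing ODE w'' + (1/16 + 1/(4s²) + μ/(2s))w + w³/(2s²) = 0 for real-valued w on (0,∞). Let E(s) = ½(w')² + (1/32 + 1/(8s²) + μ/(4s))w² + w⁴/(8s²). Then E'(s) = -(1/(4s³) + μ/(4s²))w² - w⁴/(4s³), and for s > s₀ := 16(|μ|+1) one has E(s) > 0 (when w not identically 0) and E'(s) ≤ (16|μ|/s²)E(s). Consequently E converges to a finite limit as s → ∞ and w, w' are bounded. -/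
open Real Set Filter Topology

/-!
Along a solution the `w''`-terms of `E'` cancel, and only the explicit `s`-dependence of the
coefficients survives. For `s ≥ 16(|μ|+1)` the coefficient of `w²` in `E` is at least `1/64`,
so `E ≥ (w')²/2 + w²/64`. This gives positivity (a solution with `w = w' = 0` at one point
vanishes identically, by a Grönwall argument for `w² + (w')²`) and
`E' ≤ |μ|w²/(4s²) ≤ (16|μ|/s²)E`. Hence `exp(16|μ|/s) E(s)` is nonincreasing and nonnegative:
it converges, so `E` converges, and it bounds `E`, hence `w` and `w'`.
-/

lemma monotoneOn_exp_mul_of_neg_mul_le_deriv {D : Set ℝ} (hD : Convex ℝ D) {f f' : ℝ → ℝ}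
    {k : ℝ} (hf : ∀ t ∈ D, HasDerivAt f (f' t) t) (hf' : ∀ t ∈ D, -(k * f t) ≤ f' t) :
    MonotoneOn (fun t => exp (k * t) * f t) D := by
  have hg : ∀ t ∈ D, HasDerivAt (fun t => exp (k * t) * f t)
      (exp (k * t) * (k * f t + f' t)) t := fun t ht => by
    refine (((hasDerivAt_id' t).const_mul k).exp.mul (hf t ht)).congr_deriv ?_
    ring
  refine monotoneOn_of_hasDerivWithinAt_nonneg hD
    (fun t ht => (hg t ht).continuousAt.continuousWithinAt)
    (fun t ht => (hg t (interior_subset ht)).hasDerivWithinAt) fun t ht => ?_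
  have := hf' t (interior_subset ht)
  exact mul_nonneg (exp_pos _).le (by linarith)

lemma eq_zero_of_abs_deriv_le_mul {D : Set ℝ} (hD : Convex ℝ D) {f f' : ℝ → ℝ} {K c : ℝ}
    (hf : ∀ t ∈ D, HasDerivAt f (f' t) t) (hf0 : ∀ t ∈ D, 0 ≤ f t)
    (hK : ∀ t ∈ D, |f' t| ≤ K * f t) (hc : c ∈ D) (hfc : f c = 0) : ∀ t ∈ D, f t = 0 := by
  intro t ht
  refine le_antisymm ?_ (hf0 t ht)
  rcases le_total c t with hct | htc
  · have hmono := monotoneOn_exp_mul_of_neg_mul_le_deriv hD (f := fun t => -f t) (k := -K)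
      (fun t ht => (hf t ht).neg)
      fun t ht => by linarith [(abs_le.1 (hK t ht)).2]
    have := hmono hc ht hct
    simp only [hfc, neg_zero, mul_zero, mul_neg, neg_nonneg] at this
    exact nonpos_of_mul_nonpos_right this (exp_pos _)
  · have hmono := monotoneOn_exp_mul_of_neg_mul_le_deriv hD (k := K) hf
      fun t ht => by linarith [(abs_le.1 (hK t ht)).1]
    have := hmono ht hc htc
    simp only [hfc, mul_zero] at this
    exact nonpos_of_mul_nonpos_right this (exp_pos _)

lemma eq_zero_of_hasDerivAt_of_hasDerivAt_neg_mul {D : Set ℝ} (hD : Convex ℝ D)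
    {w w' p : ℝ → ℝ} {P c : ℝ}
    (hw : ∀ t ∈ D, HasDerivAt w (w' t) t) (hw' : ∀ t ∈ D, HasDerivAt w' (-(p t * w t)) t)
    (hp : ∀ t ∈ D, |p t| ≤ P) (hc : c ∈ D) (hwc : w c = 0) (hw'c : w' c = 0) :
    ∀ t ∈ D, w t = 0 := by
  have hQ := eq_zero_of_abs_deriv_le_mul hD (f := fun t => w t ^ 2 + w' t ^ 2)
    (f' := fun t => 2 * w t * w' t * (1 - p t)) (K := 1 + P)
    (fun t ht => (((hw t ht).fun_pow 2).add ((hw' t ht).fun_pow 2)).congr_deriv (by ring))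
    (fun t _ => by positivity) (fun t ht => ?_) hc (by simp [hwc, hw'c])
  · intro t ht
    exact pow_eq_zero_iff two_ne_zero |>.1 <|
      le_antisymm (by linarith [hQ t ht, sq_nonneg (w' t)]) (sq_nonneg _)
  · have h2ab : 2 * |w t| * |w' t| ≤ w t ^ 2 + w' t ^ 2 := by
      nlinarith [sq_nonneg (|w t| - |w' t|), sq_abs (w t), sq_abs (w' t)]
    have h1p : |1 - p t| ≤ 1 + P := (abs_sub _ _).trans (by simp [hp t ht])
    calc |2 * w t * w' t * (1 - p t)| = 2 * |w t| * |w' t| * |1 - p t| := by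
          simp only [abs_mul, abs_two]
      _ ≤ (w t ^ 2 + w' t ^ 2) * (1 + P) := by gcongr
      _ = (1 + P) * (w t ^ 2 + w' t ^ 2) := mul_comm _ _

lemma AntitoneOn.exists_tendsto_atTop {f : ℝ → ℝ} {a : ℝ} (hf : AntitoneOn f (Ici a))
    (hb : BddBelow (f '' Ici a)) : ∃ L, Tendsto f atTop (𝓝 L) := by
  set g : ℝ → ℝ := fun t => f (max t a)
  have hg : Antitone g := fun x y hxy =>
    hf (le_max_right x a) (le_max_right y a) (max_le_max hxy le_rfl)
  have hgb : BddBelow (range g) :=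
    hb.mono (range_subset_iff.2 fun t => mem_image_of_mem f (le_max_right t a))
  refine ⟨_, (tendsto_atTop_ciInf hg hgb).congr' ?_⟩
  filter_upwards [eventually_ge_atTop a] with t ht
  simp only [g, max_eq_left ht]

section GrowthBound

variable {E E' : ℝ → ℝ} {k a : ℝ}

lemma antitoneOn_exp_div_mul_of_deriv_le (ha : 0 < a) (hE : ∀ s ≥ a, HasDerivAt E (E' s) s)
    (hE' : ∀ s > a, E' s ≤ k / s ^ 2 * E s) :
    AntitoneOn (fun s => exp (k / s) * E s) (Ici a) := by
  have hF : ∀ s ≥ a, HasDerivAt (fun s => exp (k / s) * E s)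
      (exp (k / s) * (E' s - k / s ^ 2 * E s)) s := fun s hs => by
    have hks : HasDerivAt (fun s => k / s) (-(k / s ^ 2)) s := by
      simpa [div_eq_mul_inv] using (hasDerivAt_inv (ha.trans_le hs).ne').const_mul k
    refine (hks.exp.mul (hE s hs)).congr_deriv ?_
    ring
  refine antitoneOn_of_hasDerivWithinAt_nonpos (convex_Ici a)
    (f' := fun s => exp (k / s) * (E' s - k / s ^ 2 * E s))
    (fun s hs => (hF s hs).continuousAt.continuousWithinAt) (fun s hs => ?_) fun s hs => ?_
  all_goals rw [interior_Ici] at hs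
  · exact (hF s (le_of_lt hs)).hasDerivWithinAt
  · exact mul_nonpos_of_nonneg_of_nonpos (exp_pos _).le (sub_nonpos.2 (hE' s hs))

lemma exists_tendsto_of_deriv_le_div_sq_mul (ha : 0 < a) (hE : ∀ s ≥ a, HasDerivAt E (E' s) s)
    (hE' : ∀ s > a, E' s ≤ k / s ^ 2 * E s) (hE0 : ∀ s ≥ a, 0 ≤ E s) :
    ∃ L, Tendsto E atTop (𝓝 L) := by
  obtain ⟨L, hL⟩ := (antitoneOn_exp_div_mul_of_deriv_le ha hE hE').exists_tendsto_atTop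
    ⟨0, forall_mem_image.2 fun s hs => mul_nonneg (exp_pos _).le (hE0 s hs)⟩
  have hexp : Tendsto (fun s : ℝ => exp (-(k / s))) atTop (𝓝 1) := by
    simpa using ((tendsto_const_nhds.div_atTop tendsto_id).neg).rexp
  refine ⟨L, by simpa [← mul_assoc, ← exp_add] using hexp.mul hL⟩

lemma le_exp_div_mul_of_deriv_le_div_sq_mul (ha : 0 < a) (hk : 0 ≤ k)
    (hE : ∀ s ≥ a, HasDerivAt E (E' s) s) (hE' : ∀ s > a, E' s ≤ k / s ^ 2 * E s)
    (hE0 : ∀ s ≥ a, 0 ≤ E s) {s : ℝ} (hs : a ≤ s) : E s ≤ exp (k / a) * E a :=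
  calc E s ≤ exp (k / s) * E s :=
        le_mul_of_one_le_left (hE0 s hs) (one_le_exp (div_nonneg hk (ha.trans_le hs).le))
    _ ≤ exp (k / a) * E a :=
        antitoneOn_exp_div_mul_of_deriv_le ha hE hE' self_mem_Ici hs hs

end GrowthBound

lemma ContDiffOn.hasDerivAt_and_hasDerivAt_deriv {f : ℝ → ℝ} {U : Set ℝ} {t : ℝ}
    (hf : ContDiffOn ℝ 2 f U) (hU : IsOpen U) (ht : t ∈ U) :
    HasDerivAt f (deriv f t) t ∧ HasDerivAt (deriv f) (deriv (deriv f) t) t :=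
  ⟨(hf.differentiableOn (by norm_num) t ht).differentiableAt (hU.mem_nhds ht) |>.hasDerivAt,
    ((hf.deriv_of_isOpen hU (m := 1) (by norm_num)).differentiableOn (by norm_num) t ht
      |>.differentiableAt (hU.mem_nhds ht) |>.hasDerivAt)⟩

def SolvesSelfSimilarODE (μ : ℝ) (w : ℝ → ℝ) : Prop :=
  ∀ s > (0:ℝ), deriv (deriv w) s + (1/16 + 1/(4*s^2) + μ/(2*s)) * w s + w s ^ 3 / (2*s^2) = 0

noncomputable def selfSimilarEnergy (μ : ℝ) (w : ℝ → ℝ) (s : ℝ) : ℝ :=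
  deriv w s ^ 2 / 2 + (1/32 + 1/(8*s^2) + μ/(4*s)) * w s ^ 2 + w s ^ 4 / (8*s^2)

section SelfSimilar

variable {μ : ℝ} {w : ℝ → ℝ}

lemma hasDerivAt_selfSimilarEnergy {s : ℝ} (hs : 0 < s) (hw : HasDerivAt w (deriv w s) s)
    (hw' : HasDerivAt (deriv w) (deriv (deriv w) s) s)
    (hode : deriv (deriv w) s + (1/16 + 1/(4*s^2) + μ/(2*s)) * w s + w s ^ 3 / (2*s^2) = 0) :
    HasDerivAt (selfSimilarEnergy μ w)
      (-(1/(4*s^3) + μ/(4*s^2)) * w s ^ 2 - w s ^ 4 / (4*s^3)) s := by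
  have h8 : (fun t : ℝ => 8 * t ^ 2) s ≠ 0 := by positivity
  have h4 : (fun t : ℝ => 4 * t) s ≠ 0 := by positivity
  have hcoeff := ((hasDerivAt_const s (1/32 : ℝ)).fun_add
    ((hasDerivAt_const s (1 : ℝ)).fun_div ((hasDerivAt_pow 2 s).const_mul 8) h8)).fun_add
    ((hasDerivAt_const s μ).fun_div ((hasDerivAt_id' s).const_mul 4) h4)
  refine ((((hw'.fun_pow 2).div_const 2).fun_add (hcoeff.fun_mul (hw.fun_pow 2))).fun_add
    ((hw.fun_pow 4).fun_div ((hasDerivAt_pow 2 s).const_mul 8) h8)).congr_deriv ?_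
  rw [show deriv (deriv w) s = -((1/16 + 1/(4*s^2) + μ/(2*s)) * w s + w s ^ 3 / (2*s^2)) by
    linarith]
  field_simp
  ring

lemma selfSimilar_eq_zero_of_eq_zero_of_deriv_eq_zero (hw : ContDiffOn ℝ 2 w (Ioi 0))
    (hode : SolvesSelfSimilarODE μ w)
    {a b : ℝ} (ha : 0 < a) (hb : 0 < b) (hwa : w a = 0) (hwa' : deriv w a = 0) : w b = 0 := by
  have hpos : ∀ t ∈ uIcc a b, 0 < t := fun t ht => lt_of_lt_of_le (lt_min ha hb) ht.1
  set p : ℝ → ℝ := fun t => 1/16 + 1/(4*t^2) + μ/(2*t) + w t ^ 2 / (2*t^2)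
  have hp : ContinuousOn p (uIcc a b) := by
    have hw0 := hw.continuousOn.mono hpos
    simp only [p]
    fun_prop (disch := intro t ht; simp [(hpos t ht).ne'])
  obtain ⟨P, hP⟩ := isCompact_uIcc.exists_bound_of_continuousOn hp
  have hder := fun t (ht : t ∈ uIcc a b) =>
    hw.hasDerivAt_and_hasDerivAt_deriv isOpen_Ioi (hpos t ht)
  refine eq_zero_of_hasDerivAt_of_hasDerivAt_neg_mul (convex_uIcc a b) (p := p) (P := P)
    (fun t ht => (hder t ht).1) (fun t ht => (hder t ht).2.congr_deriv ?_) hP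
    left_mem_uIcc hwa hwa' b right_mem_uIcc
  rw [eq_neg_iff_add_eq_zero]
  linear_combination hode t (hpos t ht)

lemma deriv_sq_div_two_add_sq_div_le_selfSimilarEnergy {s : ℝ} (hs : 16 * (|μ| + 1) ≤ s) :
    deriv w s ^ 2 / 2 + w s ^ 2 / 64 ≤ selfSimilarEnergy μ w s := by
  have hs0 : 0 < s := lt_of_lt_of_le (by positivity) hs
  have hμ : |μ| / (4 * s) ≤ 1 / 64 := by
    rw [div_le_iff₀ (by positivity)]
    linarith
  have hcoeff : 1 / 64 ≤ 1/32 + 1/(8*s^2) + μ/(4*s) := by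
    have : -(|μ| / (4 * s)) ≤ μ / (4 * s) := by
      rw [← neg_div]
      exact div_le_div_of_nonneg_right (neg_abs_le μ) (by positivity)
    have : (0 : ℝ) ≤ 1 / (8 * s ^ 2) := by positivity
    linarith
  have : (0 : ℝ) ≤ w s ^ 4 / (8 * s ^ 2) := by positivity
  unfold selfSimilarEnergy
  nlinarith [mul_le_mul_of_nonneg_right hcoeff (sq_nonneg (w s))]

lemma selfSimilarEnergy_pos (hw : ContDiffOn ℝ 2 w (Ioi 0))
    (hode : SolvesSelfSimilarODE μ w)
    (hne : ∃ s' > (0:ℝ), w s' ≠ 0) {s : ℝ} (hs : 16 * (|μ| + 1) ≤ s) :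
    0 < selfSimilarEnergy μ w s := by
  obtain ⟨s', hs', hws'⟩ := hne
  have hs0 : 0 < s := lt_of_lt_of_le (by positivity) hs
  have hlow := deriv_sq_div_two_add_sq_div_le_selfSimilarEnergy (w := w) hs
  by_cases hzero : w s = 0 ∧ deriv w s = 0
  · exact absurd (selfSimilar_eq_zero_of_eq_zero_of_deriv_eq_zero hw hode hs0 hs' hzero.1
      hzero.2) hws'
  · rcases not_and_or.1 hzero with hws | hdws
    · nlinarith [pow_pos (abs_pos.2 hws) 2, sq_abs (w s), sq_nonneg (deriv w s)]
    · nlinarith [pow_pos (abs_pos.2 hdws) 2, sq_abs (deriv w s), sq_nonneg (w s)]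

lemma selfSimilarEnergy_nonneg {s : ℝ} (hs : 16 * (|μ| + 1) ≤ s) :
    0 ≤ selfSimilarEnergy μ w s :=
  (by positivity : (0 : ℝ) ≤ deriv w s ^ 2 / 2 + w s ^ 2 / 64).trans
    (deriv_sq_div_two_add_sq_div_le_selfSimilarEnergy hs)

lemma neg_mul_sq_sub_le_mul_selfSimilarEnergy {s : ℝ} (hs : 16 * (|μ| + 1) ≤ s) :
    -(1/(4*s^3) + μ/(4*s^2)) * w s ^ 2 - w s ^ 4 / (4*s^3)
      ≤ 16 * |μ| / s ^ 2 * selfSimilarEnergy μ w s := by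
  have hs0 : 0 < s := lt_of_lt_of_le (by positivity) hs
  have hlow := deriv_sq_div_two_add_sq_div_le_selfSimilarEnergy (w := w) hs
  calc -(1/(4*s^3) + μ/(4*s^2)) * w s ^ 2 - w s ^ 4 / (4*s^3)
      ≤ 16 * |μ| / s ^ 2 * (w s ^ 2 / 64) := by
        have : -μ * (w s ^ 2 / (4 * s ^ 2)) ≤ |μ| * (w s ^ 2 / (4 * s ^ 2)) :=
          mul_le_mul_of_nonneg_right (neg_le_abs μ) (by positivity)
        have : 0 ≤ w s ^ 2 / (4 * s ^ 3) + w s ^ 4 / (4 * s ^ 3) := by positivity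
        field_simp at *
        nlinarith
    _ ≤ 16 * |μ| / s ^ 2 * selfSimilarEnergy μ w s := by
        gcongr
        nlinarith [sq_nonneg (deriv w s)]

end SelfSimilar

/-- Self-similar focusing ODE `w'' + (1/16 + 1/(4s²) + μ/(2s))w + w³/(2s²) = 0` with
energy `E = ½(w')² + (1/32 + 1/(8s²) + μ/(4s))w² + w⁴/(8s²)`:
`E' = -(1/(4s³)+μ/(4s²))w² - w⁴/(4s³)`, and for `s > 16(|μ|+1)` one has `E > 0`
(for nontrivial `w`) and `E' ≤ (16|μ|/s²)E`; hence `E` converges and `w`, `w'` are bounded. -/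
theorem stmt14 (μ : ℝ) (w : ℝ → ℝ)
    (hw : ContDiffOn ℝ 2 w (Set.Ioi 0))
    (hode : ∀ s > (0:ℝ),
      deriv (deriv w) s + (1/16 + 1/(4*s^2) + μ/(2*s)) * w s + (w s) ^ 3 / (2*s^2) = 0) :
    let E : ℝ → ℝ := fun s =>
      (deriv w s) ^ 2 / 2 + (1/32 + 1/(8*s^2) + μ/(4*s)) * (w s) ^ 2 + (w s) ^ 4 / (8*s^2)
    (∀ s > (0:ℝ),
      deriv E s = -(1/(4*s^3) + μ/(4*s^2)) * (w s) ^ 2 - (w s) ^ 4 / (4*s^3)) ∧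
    (∀ s > 16*(|μ|+1),
      ((∃ s' > (0:ℝ), w s' ≠ 0) → 0 < E s) ∧ deriv E s ≤ (16*|μ|/s^2) * E s) ∧
    (∃ L : ℝ, Filter.Tendsto E Filter.atTop (nhds L)) ∧
    ∃ C : ℝ, ∀ s ≥ 16*(|μ|+1), |w s| ≤ C ∧ |deriv w s| ≤ C := by
  intro E
  have hs₀ : (0 : ℝ) < 16 * (|μ| + 1) := by positivity
  have hE : ∀ s > (0 : ℝ), HasDerivAt (selfSimilarEnergy μ w)
      (-(1/(4*s^3) + μ/(4*s^2)) * w s ^ 2 - w s ^ 4 / (4*s^3)) s := fun s hs =>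
    have hd := hw.hasDerivAt_and_hasDerivAt_deriv isOpen_Ioi hs
    hasDerivAt_selfSimilarEnergy hs hd.1 hd.2 (hode s hs)
  have hE₀ : ∀ s ≥ 16 * (|μ| + 1), HasDerivAt (selfSimilarEnergy μ w)
      (-(1/(4*s^3) + μ/(4*s^2)) * w s ^ 2 - w s ^ 4 / (4*s^3)) s := fun s hs =>
    hE s (hs₀.trans_le hs)
  have hE' : ∀ s > 16 * (|μ| + 1), -(1/(4*s^3) + μ/(4*s^2)) * w s ^ 2 - w s ^ 4 / (4*s^3)
      ≤ 16 * |μ| / s ^ 2 * selfSimilarEnergy μ w s := fun s hs =>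
    neg_mul_sq_sub_le_mul_selfSimilarEnergy hs.le
  have hEnonneg : ∀ s ≥ 16 * (|μ| + 1), 0 ≤ selfSimilarEnergy μ w s := fun _ hs =>
    selfSimilarEnergy_nonneg hs
  refine ⟨fun s hs => (hE s hs).deriv,
    fun s hs => ⟨fun hne => selfSimilarEnergy_pos hw hode hne hs.le,
      (hE₀ s hs.le).deriv ▸ hE' s hs⟩,
    exists_tendsto_of_deriv_le_div_sq_mul hs₀ hE₀ hE' hEnonneg, ?_⟩
  set B := exp (16 * |μ| / (16 * (|μ| + 1))) * selfSimilarEnergy μ w (16 * (|μ| + 1))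
  refine ⟨√(64 * B), fun s hs => ?_⟩
  have hEB : selfSimilarEnergy μ w s ≤ B :=
    le_exp_div_mul_of_deriv_le_div_sq_mul hs₀ (by positivity) hE₀ hE' hEnonneg hs
  have hlow := deriv_sq_div_two_add_sq_div_le_selfSimilarEnergy (w := w) hs
  exact ⟨abs_le_sqrt (by nlinarith [sq_nonneg (deriv w s)]),
    abs_le_sqrt (by nlinarith [sq_nonneg (w s)])⟩
end

section
/- For any v₀ ∈ ℝ and μ ∈ ℝ, there exists ε > 0 and a unique solution v of v'' + v'/a + μv + v³ = 0 on (0,ε] such that v and a·v'(a) extend Hölder continuously to [0,ε], v(0) = v₀ and a·v'(a) = O(a²) as a → 0⁺ (in particular v'(0) = 0). -/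
/-!
Writing the equation as `(a v')' = -a f(v)` with `f x = μ x + x³`, a regular solution is the same
thing as a continuous solution of the Volterra equation
`v(a) = v₀ - ∫₀^a s⁻¹ ∫₀^s t f(v(t)) dt ds`.
The kernel gains a factor `a²`, so once `f` is truncated outside a neighbourhood of `v₀` the
right-hand side is a contraction for small `a`; conversely the integral equation gives `v' = O(a)`
and `a v' = O(a²)`, hence Lipschitz bounds. Two solutions of the integral equation satisfy
`|u - v|(a) ≤ K a ∫₀^a |u - v|`, which Grönwall's inequality forces to vanish.
-/

open Set Filter Topology Asymptotics intervalIntegral Interval NNReal BoundedContinuousFunction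

lemma abs_le_abs_of_mem_uIoc_zero {s t : ℝ} (ht : t ∈ Ι 0 s) : |t| ≤ |s| := by
  simpa using abs_sub_left_of_mem_uIcc (uIoc_subset_uIcc ht)

lemma lipschitzOnWith_of_hasDerivWithinAt {g g' : ℝ → ℝ} {s : Set ℝ} {C : ℝ} (hs : Convex ℝ s)
    (hg : ∀ x ∈ s, HasDerivWithinAt g (g' x) s x) (hC : ∀ x ∈ s, |g' x| ≤ C) :
    LipschitzOnWith C.toNNReal g s :=
  LipschitzOnWith.of_dist_le' fun x hx y hy => by
    simpa [Real.dist_eq] using hs.norm_image_sub_le_of_norm_hasDerivWithin_le hg hC hy hx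

lemma exists_continuous_eqOn_Icc {u : ℝ → ℝ} {a b : ℝ} (hu : ContinuousOn u (Icc a b)) :
    ∃ w : ℝ → ℝ, Continuous w ∧ EqOn w u (Icc a b) := by
  rcases le_or_gt a b with hab | hab
  · exact ⟨IccExtend hab ((Icc a b).domRestrict u), continuous_IccExtend_iff.2 hu.domRestrict,
      fun x hx => IccExtend_of_mem hab _ hx⟩
  · exact ⟨0, continuous_const, by simp [Icc_eq_empty_of_lt hab]⟩

lemma hasDerivAt_of_contDiffOn_two {v : ℝ → ℝ} {s : Set ℝ} (hv : ContDiffOn ℝ 2 v s)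
    (hs : IsOpen s) {x : ℝ} (hx : x ∈ s) :
    HasDerivAt v (deriv v x) x ∧ HasDerivAt (deriv v) (deriv (deriv v) x) x :=
  ⟨((hv.differentiableOn (by norm_num)) x hx).differentiableAt (hs.mem_nhds hx) |>.hasDerivAt,
    ((hv.deriv_of_isOpen hs (by norm_num : (1 : WithTop ℕ∞) + 1 ≤ 2)).differentiableOn
      one_ne_zero x hx).differentiableAt (hs.mem_nhds hx) |>.hasDerivAt⟩

lemma eq_left_of_hasDerivAt_zero {g : ℝ → ℝ} {a b : ℝ} (hg : ContinuousOn g (Icc a b))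
    (hg' : ∀ x ∈ Ioo a b, HasDerivAt g 0 x) : ∀ x ∈ Icc a b, g x = g a := by
  intro x hx
  rcases hx.1.eq_or_lt with rfl | hax
  · rfl
  obtain ⟨c, -, hc⟩ := exists_hasDerivAt_eq_slope g (fun _ => 0) hax
    (hg.mono (Icc_subset_Icc_right hx.2)) fun y hy => hg' y ⟨hy.1, hy.2.trans_le hx.2⟩
  rw [eq_comm, div_eq_zero_iff, sub_eq_zero, sub_eq_zero] at hc
  exact hc.resolve_right hax.ne'

lemma eqOn_zero_of_le_mul_integral {g : ℝ → ℝ} {K b : ℝ} (hg : Continuous g)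
    (hg0 : ∀ x ∈ Icc 0 b, 0 ≤ g x) (h : ∀ x ∈ Icc 0 b, g x ≤ K * ∫ t in 0..x, g t) :
    EqOn g 0 (Icc 0 b) := by
  have hW0 : ∀ x ∈ Icc 0 b, 0 ≤ ∫ t in 0..x, g t := fun x hx =>
    integral_nonneg hx.1 fun t ht => hg0 t ⟨ht.1, ht.2.trans hx.2⟩
  have hW : ∀ x ∈ Icc 0 b, ∫ t in 0..x, g t = 0 :=
    eq_zero_of_abs_deriv_le_mul_abs_self_of_eq_zero_right (f' := g) (K := K)
      (continuous_primitive (fun _ _ => hg.intervalIntegrable _ _) 0).continuousOn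
      (fun x _ => (hg.integral_hasStrictDerivAt 0 x).hasDerivAt.hasDerivWithinAt)
      integral_same fun x hx => by
        rw [Real.norm_eq_abs, Real.norm_eq_abs, abs_of_nonneg (hg0 x (Ico_subset_Icc_self hx)),
          abs_of_nonneg (hW0 x (Ico_subset_Icc_self hx))]
        exact h x (Ico_subset_Icc_self hx)
  exact fun x hx => le_antisymm (by simpa [hW x hx] using h x hx) (hg0 x hx)

namespace Radial

/-- `radialPotential F` solves `w'' + w'/a = F` with `w(0) = 0` and `a w'(a) → 0`, and
`radialSlope F` is its derivative; at `s = 0` the junk value `0⁻¹ = 0` gives the right value. -/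
noncomputable def radialSlope (F : ℝ → ℝ) (s : ℝ) : ℝ := s⁻¹ * ∫ t in 0..s, t * F t

noncomputable def radialPotential (F : ℝ → ℝ) (a : ℝ) : ℝ :=
  ∫ s in 0..a, radialSlope F s

variable {F G : ℝ → ℝ} {M s a : ℝ}

@[simp] lemma radialSlope_zero_right : radialSlope F 0 = 0 := by simp [radialSlope]

@[simp] lemma radialPotential_zero_right : radialPotential F 0 = 0 := integral_same

lemma mul_radialSlope (F : ℝ → ℝ) (s : ℝ) :
    s * radialSlope F s = ∫ t in 0..s, t * F t := by
  rcases eq_or_ne s 0 with rfl | hs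
  · simp
  · exact mul_inv_cancel_left₀ hs _

lemma abs_integral_id_mul_le (hF : ∀ t ∈ Ι 0 s, |F t| ≤ M) :
    |∫ t in 0..s, t * F t| ≤ M * s ^ 2 := by
  have h : ∀ t ∈ Ι 0 s, ‖t * F t‖ ≤ |s| * M := fun t ht => by
    rw [Real.norm_eq_abs, abs_mul]
    exact mul_le_mul (abs_le_abs_of_mem_uIoc_zero ht) (hF t ht) (abs_nonneg _) (abs_nonneg _)
  calc |∫ t in 0..s, t * F t| ≤ |s| * M * |s - 0| := norm_integral_le_of_norm_le_const h
    _ = M * s ^ 2 := by rw [sub_zero, ← sq_abs s]; ring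

lemma abs_radialSlope_le (hF : ∀ t ∈ Ι 0 s, |F t| ≤ M) : |radialSlope F s| ≤ M * |s| := by
  rcases eq_or_ne s 0 with rfl | hs
  · simp
  refine le_of_mul_le_mul_left ?_ (abs_pos.2 hs)
  calc |s| * |radialSlope F s| = |∫ t in 0..s, t * F t| := by rw [← abs_mul, mul_radialSlope]
    _ ≤ M * s ^ 2 := abs_integral_id_mul_le hF
    _ = |s| * (M * |s|) := by rw [← sq_abs s]; ring

lemma hasDerivAt_integral_id_mul (hF : Continuous F) (s : ℝ) :
    HasDerivAt (fun s => ∫ t in 0..s, t * F t) (s * F s) s :=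
  ((continuous_id.mul hF).integral_hasStrictDerivAt 0 s).hasDerivAt

lemma continuous_radialSlope (hF : Continuous F) : Continuous (radialSlope F) := by
  refine continuous_iff_continuousAt.2 fun s => ?_
  rcases eq_or_ne s 0 with rfl | hs
  · obtain ⟨M, hM⟩ := (isCompact_Icc (a := -1) (b := 1)).exists_bound_of_continuousOn
      hF.continuousOn
    have hbound : ∀ᶠ s in 𝓝 (0:ℝ), ‖radialSlope F s‖ ≤ M * |s| := by
      filter_upwards [Ioo_mem_nhds neg_one_lt_zero one_pos] with s hs
      refine abs_radialSlope_le fun t ht => hM t (abs_le.1 ?_)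
      exact (abs_le_abs_of_mem_uIoc_zero ht).trans (abs_lt.2 hs).le
    have hlim : Tendsto (fun s : ℝ => M * |s|) (𝓝 0) (𝓝 0) := by
      simpa using (continuous_abs.tendsto (0:ℝ)).const_mul M
    simpa [ContinuousAt] using squeeze_zero_norm' hbound hlim
  · exact (continuousAt_inv₀ hs).mul (hasDerivAt_integral_id_mul hF s).continuousAt

lemma hasDerivAt_radialPotential (hF : Continuous F) (a : ℝ) :
    HasDerivAt (radialPotential F) (radialSlope F a) a :=
  ((continuous_radialSlope hF).integral_hasStrictDerivAt 0 a).hasDerivAt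

lemma hasDerivAt_radialSlope (hF : Continuous F) (hs : s ≠ 0) :
    HasDerivAt (radialSlope F) (F s - radialSlope F s / s) s := by
  refine ((hasDerivAt_inv hs).mul (hasDerivAt_integral_id_mul hF s)).congr_deriv ?_
  rw [radialSlope]
  field_simp
  ring

lemma continuous_radialPotential (hF : Continuous F) : Continuous (radialPotential F) :=
  continuous_iff_continuousAt.2 fun a => (hasDerivAt_radialPotential hF a).continuousAt

lemma contDiffOn_radialPotential (hF : Continuous F) :
    ContDiffOn ℝ 2 (radialPotential F) (Ioi 0) := by
  have hderiv : deriv (radialPotential F) = radialSlope F :=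
    funext fun a => (hasDerivAt_radialPotential hF a).deriv
  rw [show (2 : WithTop ℕ∞) = 1 + 1 from rfl, contDiffOn_succ_iff_deriv_of_isOpen isOpen_Ioi,
    hderiv, show (1 : WithTop ℕ∞) = 0 + 1 from rfl,
    contDiffOn_succ_iff_deriv_of_isOpen isOpen_Ioi, contDiffOn_zero]
  refine ⟨fun a _ => (hasDerivAt_radialPotential hF a).differentiableAt.differentiableWithinAt,
    by simp,
    fun s hs => (hasDerivAt_radialSlope hF (ne_of_gt hs)).differentiableAt.differentiableWithinAt,
    by simp, ?_⟩
  refine ContinuousOn.congr (f := fun s => F s - radialSlope F s / s) ?_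
    fun s hs => (hasDerivAt_radialSlope hF (ne_of_gt hs)).deriv
  exact hF.continuousOn.sub
    ((continuous_radialSlope hF).continuousOn.div continuousOn_id fun s hs => ne_of_gt hs)

lemma deriv_deriv_add_deriv_div_add_eq_zero {v : ℝ → ℝ} {c : ℝ} (hF : Continuous F)
    (ha : a ≠ 0) (hv : v =ᶠ[𝓝 a] fun x => c - radialPotential F x) :
    deriv (deriv v) a + deriv v a / a + F a = 0 := by
  have hslope : deriv (fun x => c - radialPotential F x) = fun x => -radialSlope F x :=
    funext fun x => ((hasDerivAt_radialPotential hF x).const_sub c).deriv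
  have hdv : deriv v =ᶠ[𝓝 a] fun x => -radialSlope F x := hslope ▸ hv.deriv
  rw [hdv.deriv_eq, hdv.eq_of_nhds, (hasDerivAt_radialSlope hF ha).fun_neg.deriv]
  ring

lemma abs_radialPotential_le (hM : ∀ t, |F t| ≤ M) (a : ℝ) :
    |radialPotential F a| ≤ M * a ^ 2 := by
  have h : ∀ s ∈ Ι 0 a, ‖radialSlope F s‖ ≤ M * |a| := fun s hs =>
    (abs_radialSlope_le fun t _ => hM t).trans <|
      mul_le_mul_of_nonneg_left (abs_le_abs_of_mem_uIoc_zero hs) ((abs_nonneg _).trans (hM 0))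
  calc |radialPotential F a| ≤ M * |a| * |a - 0| := norm_integral_le_of_norm_le_const h
    _ = M * a ^ 2 := by rw [sub_zero, ← sq_abs a]; ring

lemma abs_radialPotential_le_of_mem_Icc {T : ℝ} (hM : ∀ t, |F t| ≤ M) (ha : a ∈ Icc 0 T) :
    |radialPotential F a| ≤ M * T ^ 2 :=
  (abs_radialPotential_le hM a).trans <|
    mul_le_mul_of_nonneg_left (pow_le_pow_left₀ ha.1 ha.2 2) ((abs_nonneg _).trans (hM 0))

lemma radialPotential_sub (hF : Continuous F) (hG : Continuous G) (a : ℝ) :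
    radialPotential (F - G) a = radialPotential F a - radialPotential G a := by
  have hslope : radialSlope (F - G) = radialSlope F - radialSlope G := funext fun s => by
    have hint : ∀ H : ℝ → ℝ, Continuous H →
        IntervalIntegrable (fun t => t * H t) MeasureTheory.volume 0 s :=
      fun H hH => (continuous_id.mul hH).intervalIntegrable 0 s
    simp only [radialSlope, Pi.sub_apply, mul_sub]
    rw [integral_sub (hint F hF) (hint G hG), mul_sub]
  rw [radialPotential, hslope]
  exact integral_sub ((continuous_radialSlope hF).intervalIntegrable 0 a)
    ((continuous_radialSlope hG).intervalIntegrable 0 a)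

lemma abs_radialPotential_le_mul_integral (hF : Continuous F) (ha : 0 ≤ a) :
    |radialPotential F a| ≤ a * ∫ t in 0..a, |F t| := by
  have hslope : ∀ s ∈ Ι 0 a, ‖radialSlope F s‖ ≤ ∫ t in 0..a, |F t| := by
    intro s hs
    rw [uIoc_of_le ha] at hs
    have hs0 : 0 < s := hs.1
    calc ‖radialSlope F s‖ = s⁻¹ * |∫ t in 0..s, t * F t| := by
          rw [Real.norm_eq_abs, radialSlope, abs_mul, abs_inv, abs_of_pos hs0]
      _ ≤ s⁻¹ * ∫ t in 0..s, s * |F t| := by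
          gcongr
          refine (abs_integral_le_integral_abs hs0.le).trans
            (integral_mono_on hs0.le ((continuous_id.mul hF).abs.intervalIntegrable 0 s)
              ((continuous_const.mul hF.abs).intervalIntegrable 0 s) fun t ht => ?_)
          rw [abs_mul, abs_of_nonneg ht.1]
          exact mul_le_mul_of_nonneg_right ht.2 (abs_nonneg _)
      _ = ∫ t in 0..s, |F t| := by rw [integral_const_mul, inv_mul_cancel_left₀ hs0.ne']
      _ ≤ ∫ t in 0..a, |F t| :=
          integral_mono_interval le_rfl hs0.le hs.2 (Eventually.of_forall fun t => abs_nonneg _)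
            (hF.abs.intervalIntegrable 0 a)
  calc |radialPotential F a| ≤ (∫ t in 0..a, |F t|) * |a - 0| :=
        norm_integral_le_of_norm_le_const hslope
    _ = a * ∫ t in 0..a, |F t| := by rw [sub_zero, abs_of_nonneg ha, mul_comm]

theorem eqOn_of_eq_sub_radialPotential {f u v : ℝ → ℝ} {c b : ℝ} (hf : LocallyLipschitz f)
    (hu : Continuous u) (hv : Continuous v)
    (hu' : ∀ a ∈ Icc 0 b, u a = c - radialPotential (f ∘ u) a)
    (hv' : ∀ a ∈ Icc 0 b, v a = c - radialPotential (f ∘ v) a) : EqOn u v (Icc 0 b) := by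
  obtain ⟨K, hK⟩ := hf.locallyLipschitzOn.exists_lipschitzOnWith_of_compact
    ((isCompact_Icc.image hu).union (isCompact_Icc.image hv))
  have hfu : Continuous (f ∘ u) := hf.continuous.comp hu
  have hfv : Continuous (f ∘ v) := hf.continuous.comp hv
  have hlip : ∀ t ∈ Icc 0 b, |f (v t) - f (u t)| ≤ K * |u t - v t| := fun t ht => by
    have := hK.dist_le_mul (v t) (Or.inr ⟨t, ht, rfl⟩) (u t) (Or.inl ⟨t, ht, rfl⟩)
    rwa [Real.dist_eq, Real.dist_eq, abs_sub_comm (v t)] at this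
  have hgron : EqOn (fun t => |u t - v t|) 0 (Icc 0 b) := by
    refine eqOn_zero_of_le_mul_integral (K := K * b) (hu.sub hv).abs
      (fun _ _ => abs_nonneg _) fun x hx => ?_
    calc |u x - v x| = |radialPotential (f ∘ v - f ∘ u) x| := by
          rw [hu' x hx, hv' x hx, radialPotential_sub hfv hfu, sub_sub_sub_cancel_left]
      _ ≤ x * ∫ t in 0..x, |f (v t) - f (u t)| :=
          abs_radialPotential_le_mul_integral (hfv.sub hfu) hx.1
      _ ≤ b * ∫ t in 0..x, K * |u t - v t| :=
          mul_le_mul hx.2 (integral_mono_on hx.1 ((hfv.sub hfu).abs.intervalIntegrable 0 x)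
            ((continuous_const.mul (hu.sub hv).abs).intervalIntegrable 0 x)
            fun t ht => hlip t ⟨ht.1, ht.2.trans hx.2⟩)
            (integral_nonneg hx.1 fun t _ => by positivity) (hx.1.trans hx.2)
      _ = K * b * ∫ t in 0..x, |u t - v t| := by rw [integral_const_mul]; ring
  exact fun x hx => sub_eq_zero.1 (abs_eq_zero.1 (hgron hx))

-- Clamping `a` to `[0, T]` keeps the right-hand side bounded, so it acts on `ℝ →ᵇ ℝ`.
theorem exists_eq_sub_radialPotential_projIcc {F₀ : ℝ → ℝ} {K : ℝ≥0} {M T : ℝ}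
    (hF₀ : LipschitzWith K F₀) (hM : ∀ x, |F₀ x| ≤ M) (hT : 0 ≤ T) (hKT : K * T ^ 2 < 1)
    (c : ℝ) :
    ∃ v : ℝ →ᵇ ℝ, ∀ a, v a = c - radialPotential (F₀ ∘ v) (projIcc 0 T hT a) := by
  have hcont : ∀ g : ℝ →ᵇ ℝ,
      Continuous fun a => c - radialPotential (F₀ ∘ g) (projIcc 0 T hT a) := fun g =>
    continuous_const.sub <| (continuous_radialPotential (hF₀.continuous.comp g.continuous)).comp
      (continuous_subtype_val.comp continuous_projIcc)
  let Φ : (ℝ →ᵇ ℝ) → ℝ →ᵇ ℝ := fun g =>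
    .ofNormedAddCommGroup _ (hcont g) (|c| + M * T ^ 2) fun a =>
      (norm_sub_le _ _).trans <| add_le_add_right
        (abs_radialPotential_le_of_mem_Icc (fun t => hM _) (projIcc 0 T hT a).2) _
  have hΦ : ContractingWith (K * (T ^ 2).toNNReal) Φ := by
    have hκ : ((K * (T ^ 2).toNNReal : ℝ≥0) : ℝ) = K * T ^ 2 := by
      rw [NNReal.coe_mul, Real.coe_toNNReal _ (sq_nonneg T)]
    refine ⟨by rwa [← NNReal.coe_lt_coe, hκ], LipschitzWith.of_dist_le_mul fun g h => ?_⟩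
    rw [hκ]
    refine (BoundedContinuousFunction.dist_le (by positivity)).2 fun a => ?_
    have hdiff : ∀ t, |(F₀ ∘ g - F₀ ∘ h) t| ≤ K * dist g h := fun t =>
      (hF₀.dist_le_mul (g t) (h t)).trans
        (mul_le_mul_of_nonneg_left (BoundedContinuousFunction.dist_coe_le_dist t) K.2)
    calc dist (Φ g a) (Φ h a)
        = |radialPotential (F₀ ∘ g - F₀ ∘ h) (projIcc 0 T hT a)| := by
          rw [radialPotential_sub (hF₀.continuous.comp g.continuous)
            (hF₀.continuous.comp h.continuous), Real.dist_eq, ← abs_neg]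
          simp only [Φ, BoundedContinuousFunction.coe_ofNormedAddCommGroup]
          ring_nf
      _ ≤ K * dist g h * T ^ 2 := abs_radialPotential_le_of_mem_Icc hdiff (projIcc 0 T hT a).2
      _ = K * T ^ 2 * dist g h := by ring
  exact ⟨_, fun a => congrFun (congrArg DFunLike.coe hΦ.fixedPoint_isFixedPt.symm) a⟩

theorem exists_eq_sub_radialPotential {f : ℝ → ℝ} (hf : LocallyLipschitz f) (c : ℝ) :
    ∃ T > 0, ∃ v : ℝ → ℝ, Continuous v ∧ (∃ M, ∀ t, |f (v t)| ≤ M) ∧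
      ∀ a ∈ Icc 0 T, v a = c - radialPotential (f ∘ v) a := by
  have hI : c - 1 ≤ c + 1 := by linarith
  obtain ⟨K, hK⟩ := hf.locallyLipschitzOn.exists_lipschitzOnWith_of_compact
    (isCompact_Icc (a := c - 1) (b := c + 1))
  obtain ⟨M, hM⟩ := (isCompact_Icc (a := c - 1) (b := c + 1)).exists_bound_of_continuousOn
    hf.continuous.continuousOn
  -- truncating `f` outside `[c - 1, c + 1]` makes it globally Lipschitz and bounded
  set F₀ : ℝ → ℝ := fun x => f (projIcc (c - 1) (c + 1) hI x)
  have hF₀ : LipschitzWith K F₀ := by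
    have h := hK.to_restrict.comp (LipschitzWith.projIcc hI)
    rwa [mul_one] at h
  have hF₀M : ∀ x, |F₀ x| ≤ M := fun x => hM _ (projIcc _ _ hI x).2
  have hsmall : ∀ᶠ T in 𝓝 (0:ℝ), M * T ^ 2 < 1 ∧ K * T ^ 2 < 1 :=
    ((by fun_prop : Continuous fun T : ℝ => M * T ^ 2).continuousAt.eventually_lt
        continuousAt_const (by simp)).and
      ((by fun_prop : Continuous fun T : ℝ => K * T ^ 2).continuousAt.eventually_lt
        continuousAt_const (by simp))
  obtain ⟨T, ⟨hMT, hKT⟩, hT : 0 < T⟩ :=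
    ((hsmall.filter_mono nhdsWithin_le_nhds).and (self_mem_nhdsWithin (s := Ioi 0))).exists
  obtain ⟨v, hv⟩ := exists_eq_sub_radialPotential_projIcc hF₀ hF₀M hT.le hKT c
  have hmem : ∀ t, v t ∈ Icc (c - 1) (c + 1) := fun t => by
    have hdist : |v t - c| < 1 := by
      rw [hv t, sub_sub_cancel_left, abs_neg]
      exact (abs_radialPotential_le_of_mem_Icc (fun s => hF₀M (v s)) (projIcc 0 T _ t).2).trans_lt
        hMT
    constructor <;> linarith [abs_lt.1 hdist]
  have hF₀v : ∀ t, F₀ (v t) = f (v t) := fun t => by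
    simp only [F₀, projIcc_of_mem hI (hmem t)]
  refine ⟨T, hT, v, v.continuous, ⟨M, fun t => hF₀v t ▸ hF₀M (v t)⟩, fun a ha => ?_⟩
  rw [hv a, show F₀ ∘ v = f ∘ v from funext hF₀v, projIcc_of_mem hT.le ha]

structure IsRegularRadialSolution (f : ℝ → ℝ) (v₀ ε : ℝ) (v : ℝ → ℝ) : Prop where
  contDiffOn : ContDiffOn ℝ 2 v (Ioc 0 ε)
  ode : ∀ a ∈ Ioc 0 ε, deriv (deriv v) a + deriv v a / a + f (v a) = 0
  apply_zero : v 0 = v₀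
  holder : ∃ C γ : ℝ≥0, 0 < γ ∧ HolderOnWith C γ v (Icc 0 ε) ∧
    HolderOnWith C γ (fun a => a * deriv v a) (Icc 0 ε)

namespace IsRegularRadialSolution

variable {f v w : ℝ → ℝ} {v₀ ε : ℝ}

lemma continuousOn (hv : IsRegularRadialSolution f v₀ ε v) : ContinuousOn v (Icc 0 ε) := by
  obtain ⟨C, γ, hγ, hv, -⟩ := hv.holder
  exact hv.continuousOn hγ

lemma continuousOn_mul_deriv (hv : IsRegularRadialSolution f v₀ ε v) :
    ContinuousOn (fun a => a * deriv v a) (Icc 0 ε) := by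
  obtain ⟨C, γ, hγ, -, hv'⟩ := hv.holder
  exact hv'.continuousOn hγ

lemma mul_deriv_eq (hf : Continuous f) (hv : IsRegularRadialSolution f v₀ ε v)
    (hw : Continuous w) (hwv : EqOn w v (Icc 0 ε)) :
    ∀ a ∈ Icc 0 ε, a * deriv v a = -∫ t in 0..a, t * f (w t) := by
  -- `a v'(a) + ∫₀^a t f(v)` has derivative `a (v'' + v'/a + f(v)) = 0` and vanishes at `0`
  have hfw : Continuous (f ∘ w) := hf.comp hw
  have hconst := eq_left_of_hasDerivAt_zero
    (g := fun a => a * deriv v a + ∫ t in 0..a, t * f (w t))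
    (hv.continuousOn_mul_deriv.add (continuous_primitive
      (fun _ _ => (continuous_id.mul hfw).intervalIntegrable _ _) 0).continuousOn)
    fun x hx => by
      obtain ⟨-, hv₂⟩ := hasDerivAt_of_contDiffOn_two (hv.contDiffOn.mono Ioo_subset_Ioc_self)
        isOpen_Ioo hx
      refine ((hasDerivAt_id x).mul hv₂ |>.add (hasDerivAt_integral_id_mul hfw x)).congr_deriv ?_
      have hode := hv.ode x (Ioo_subset_Ioc_self hx)
      rw [Function.comp_apply, hwv (Ioo_subset_Icc_self hx)]
      have hcancel : x * (deriv v x / x) = deriv v x := mul_div_cancel₀ _ hx.1.ne'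
      simp only [id, one_mul]
      linear_combination x * hode - hcancel
  intro a ha
  simpa [eq_neg_iff_add_eq_zero] using hconst a ha

lemma eq_sub_radialPotential (hf : Continuous f) (hv : IsRegularRadialSolution f v₀ ε v)
    (hw : Continuous w) (hwv : EqOn w v (Icc 0 ε)) :
    ∀ a ∈ Icc 0 ε, v a = v₀ - radialPotential (f ∘ w) a := by
  have hfw : Continuous (f ∘ w) := hf.comp hw
  have hconst := eq_left_of_hasDerivAt_zero (g := fun a => v a + radialPotential (f ∘ w) a)
    (hv.continuousOn.add (continuous_radialPotential hfw).continuousOn) fun x hx => by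
      refine ((hasDerivAt_of_contDiffOn_two (hv.contDiffOn.mono Ioo_subset_Ioc_self) isOpen_Ioo
        hx).1.add (hasDerivAt_radialPotential hfw x)).congr_deriv ?_
      have hflux := hv.mul_deriv_eq hf hw hwv x (Ioo_subset_Icc_self hx)
      rw [← mul_radialSlope, ← mul_neg] at hflux
      rw [mul_left_cancel₀ hx.1.ne' hflux]
      exact neg_add_cancel _
  intro a ha
  have := hconst a ha
  rw [radialPotential_zero_right, add_zero, hv.apply_zero] at this
  linarith

lemma eqOn (hf : LocallyLipschitz f) {u : ℝ → ℝ} (hu : IsRegularRadialSolution f v₀ ε u)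
    (hv : IsRegularRadialSolution f v₀ ε v) : EqOn u v (Icc 0 ε) := by
  obtain ⟨wu, hwu, hwuu⟩ := exists_continuous_eqOn_Icc hu.continuousOn
  obtain ⟨wv, hwv, hwvv⟩ := exists_continuous_eqOn_Icc hv.continuousOn
  have hw := eqOn_of_eq_sub_radialPotential hf hwu hwv
    (fun a ha => (hwuu ha).trans (hu.eq_sub_radialPotential hf.continuous hwu hwuu a ha))
    (fun a ha => (hwvv ha).trans (hv.eq_sub_radialPotential hf.continuous hwv hwvv a ha))
  exact fun a ha => (hwuu ha).symm.trans ((hw ha).trans (hwvv ha))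

lemma isBigO (hf : Continuous f) (hε : 0 < ε) (hv : IsRegularRadialSolution f v₀ ε v) :
    (fun a => a * deriv v a) =O[𝓝[>] 0] fun a => a ^ 2 := by
  obtain ⟨w, hw, hwv⟩ := exists_continuous_eqOn_Icc hv.continuousOn
  obtain ⟨M, hM⟩ := isCompact_Icc.exists_bound_of_continuousOn (hf.comp hw).continuousOn
    (s := Icc 0 ε)
  refine isBigO_iff.2 ⟨M, ?_⟩
  filter_upwards [Ioo_mem_nhdsGT hε] with a ha
  rw [hv.mul_deriv_eq hf hw hwv a (Ioo_subset_Icc_self ha), norm_neg, Real.norm_eq_abs,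
    Real.norm_eq_abs, abs_of_nonneg (sq_nonneg a)]
  refine abs_integral_id_mul_le fun t ht => hM t ?_
  rw [uIoc_of_le ha.1.le] at ht
  exact ⟨ht.1.le, ht.2.trans ha.2.le⟩

end IsRegularRadialSolution

theorem isRegularRadialSolution_of_eq_sub_radialPotential {f v : ℝ → ℝ} {v₀ ε T M : ℝ}
    (hf : Continuous f) (hv : Continuous v) (hM : ∀ t, |f (v t)| ≤ M) (hε : 0 ≤ ε)
    (hεT : ε < T)
    (hveq : ∀ a ∈ Icc 0 T, v a = v₀ - radialPotential (f ∘ v) a) :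
    IsRegularRadialSolution f v₀ ε v := by
  have hF : Continuous (f ∘ v) := hf.comp hv
  have hM0 : 0 ≤ M := (abs_nonneg _).trans (hM 0)
  have hIcc : Icc 0 ε ⊆ Icc 0 T := Icc_subset_Icc_right hεT.le
  have hnear : ∀ a ∈ Ioo 0 T, v =ᶠ[𝓝 a] fun x => v₀ - radialPotential (f ∘ v) x :=
    fun a ha => eventually_of_mem (Ioo_mem_nhds ha.1 ha.2) fun x hx =>
      hveq x (Ioo_subset_Icc_self hx)
  have hflux : ∀ a ∈ Icc 0 ε, a * deriv v a = -∫ t in 0..a, t * f (v t) := by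
    intro a ha
    rcases ha.1.eq_or_lt with rfl | ha0
    · simp
    rw [(hnear a ⟨ha0, ha.2.trans_lt hεT⟩).deriv_eq,
      ((hasDerivAt_radialPotential hF a).const_sub v₀).deriv, mul_neg, mul_radialSlope]
    rfl
  refine ⟨((contDiffOn_const.sub (contDiffOn_radialPotential hF)).mono
      fun a ha => ha.1).congr fun a ha => hveq a (hIcc (Ioc_subset_Icc_self ha)),
    fun a ha => deriv_deriv_add_deriv_div_add_eq_zero hF ha.1.ne'
      (hnear a ⟨ha.1, ha.2.trans_lt hεT⟩),
    by simpa using hveq 0 ⟨le_rfl, hε.trans hεT.le⟩, (M * ε).toNNReal, 1, one_pos, ?_, ?_⟩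
  · refine holderOnWith_one.2 <| lipschitzOnWith_of_hasDerivWithinAt (convex_Icc 0 ε)
      (fun x hx => ((hasDerivAt_radialPotential hF x).const_sub v₀).hasDerivWithinAt.congr
        (fun y hy => hveq y (hIcc hy)) (hveq x (hIcc hx))) fun x hx => ?_
    rw [abs_neg]
    exact (abs_radialSlope_le fun t _ => hM t).trans
      (mul_le_mul_of_nonneg_left ((abs_of_nonneg hx.1).trans_le hx.2) hM0)
  · refine holderOnWith_one.2 <| lipschitzOnWith_of_hasDerivWithinAt (convex_Icc 0 ε)
      (fun x hx => (hasDerivAt_integral_id_mul hF x).neg.hasDerivWithinAt.congr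
        hflux (hflux x hx)) fun x hx => ?_
    rw [abs_neg, abs_mul, abs_of_nonneg hx.1, mul_comm]
    exact mul_le_mul (hM x) hx.2 hx.1 hM0

theorem exists_isRegularRadialSolution {f : ℝ → ℝ} (hf : LocallyLipschitz f) (v₀ : ℝ) :
    ∃ ε > 0, ∃ v, IsRegularRadialSolution f v₀ ε v := by
  obtain ⟨T, hT, v, hv, ⟨M, hM⟩, hveq⟩ := exists_eq_sub_radialPotential hf v₀
  exact ⟨T / 2, by positivity, v, isRegularRadialSolution_of_eq_sub_radialPotential
    hf.continuous hv hM (by positivity) (by linarith) hveq⟩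

end Radial

open Radial

/-- Local existence and uniqueness at the regular singular point `a = 0` for the focusing
radial standing-wave ODE: for any `v₀, μ ∈ ℝ` there are `ε > 0` and a unique solution `v`
of `v'' + v'/a + μv + v³ = 0` on `(0,ε]` such that `v` and `a·v'(a)` extend Hölder
continuously to `[0,ε]`, `v(0) = v₀`, and `a·v'(a) = O(a²)` as `a → 0⁺`. -/
theorem stmt18 (v₀ μ : ℝ) :
    ∃ ε > (0:ℝ), ∃ v : ℝ → ℝ,
      (ContDiffOn ℝ 2 v (Set.Ioc 0 ε) ∧
        (∀ a ∈ Set.Ioc (0:ℝ) ε,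
          deriv (deriv v) a + deriv v a / a + μ * v a + (v a) ^ 3 = 0) ∧
        v 0 = v₀ ∧
        (∃ C γ : NNReal, 0 < γ ∧ HolderOnWith C γ v (Set.Icc 0 ε) ∧
          HolderOnWith C γ (fun a => a * deriv v a) (Set.Icc 0 ε)) ∧
        (fun a => a * deriv v a) =O[nhdsWithin 0 (Set.Ioi (0:ℝ))] fun a => a ^ 2) ∧
      ∀ u : ℝ → ℝ,
        (ContDiffOn ℝ 2 u (Set.Ioc 0 ε) ∧
          (∀ a ∈ Set.Ioc (0:ℝ) ε,
            deriv (deriv u) a + deriv u a / a + μ * u a + (u a) ^ 3 = 0) ∧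
          u 0 = v₀ ∧
          (∃ C γ : NNReal, 0 < γ ∧ HolderOnWith C γ u (Set.Icc 0 ε) ∧
            HolderOnWith C γ (fun a => a * deriv u a) (Set.Icc 0 ε)) ∧
          (fun a => a * deriv u a) =O[nhdsWithin 0 (Set.Ioi (0:ℝ))] fun a => a ^ 2) →
        Set.EqOn v u (Set.Ioc 0 ε) := by
  have hf : LocallyLipschitz fun x : ℝ => μ * x + x ^ 3 :=
    (by fun_prop : ContDiff ℝ 1 fun x : ℝ => μ * x + x ^ 3).locallyLipschitz
  obtain ⟨ε, hε, v, hv⟩ := exists_isRegularRadialSolution hf v₀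
  refine ⟨ε, hε, v, ⟨hv.contDiffOn, fun a ha => by linear_combination hv.ode a ha,
    hv.apply_zero, hv.holder, hv.isBigO hf.continuous hε⟩, ?_⟩
  rintro u ⟨hu₁, hu₂, hu₃, hu₄, -⟩
  have hu : IsRegularRadialSolution (fun x => μ * x + x ^ 3) v₀ ε u :=
    ⟨hu₁, fun a ha => by linear_combination hu₂ a ha, hu₃, hu₄⟩
  exact (hv.eqOn hf hu).mono Ioc_subset_Icc_self
end
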